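/- arXiv:2010.06020 — 7 statements merged into one kernel-verified Lean document; each statement's English description precedes it below -/
import Mathlib

section
/- Let G be a group with a normal subgroup N such that the quotient G/N is virtually abelian and the centralizer C_G(N) of N in G has finite index in G. Then G is virtually 2-nilpotent, i.e., G has a finite-index subgroup H whose commutator subgroup [H,H] is contained in the center of H. -/
open scoped commutatorElement

/-! If `K ≤ G/N` is abelian of finite index, then on `H = C_G(N) ∩ π⁻¹(K)` every commutator
lies in `N` (because `K` is abelian) and hence commutes with all of `H` (because `H`
centralizes `N`); `H` has finite index as the intersection of two finite-index subgroups. -/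

instance Subgroup.finiteIndex_comap {G Q : Type*} [Group G] [Group Q] (f : G →* Q)
    (K : Subgroup Q) [K.FiniteIndex] : (K.comap f).FiniteIndex :=
  ⟨by rw [Subgroup.index_comap]; exact Subgroup.FiniteIndex.index_ne_zero⟩

theorem MonoidHom.commutatorElement_mem_ker {G Q : Type*} [Group G] [Group Q] (f : G →* Q)
    {a b : G} (h : Commute (f a) (f b)) : ⁅a, b⁆ ∈ f.ker := by
  rwa [MonoidHom.mem_ker, map_commutatorElement, commutatorElement_eq_one_iff_commute]

/-- **Lemma.** If `1 → N → G → K → 1` is an extension with `K = G/N` virtually abelian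
and the centralizer `C_G(N)` of finite index in `G`, then `G` is virtually 2-nilpotent:
it has a finite-index subgroup `H` whose commutator subgroup is contained in its
center. -/
theorem virtually_two_nilpotent_of_extension {G : Type*} [Group G]
    (N : Subgroup G) [N.Normal]
    (hK : ∃ K : Subgroup (G ⧸ N), K.FiniteIndex ∧ ∀ a ∈ K, ∀ b ∈ K, a * b = b * a)
    (hC : (Subgroup.centralizer (N : Set G)).FiniteIndex) :
    ∃ H : Subgroup G, H.FiniteIndex ∧
      ∀ a ∈ H, ∀ b ∈ H, ∀ c ∈ H, ⁅a, b⁆ * c = c * ⁅a, b⁆ := by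
  obtain ⟨K, hKfi, hKab⟩ := hK
  refine ⟨Subgroup.centralizer (N : Set G) ⊓ K.comap (QuotientGroup.mk' N), inferInstance, ?_⟩
  rintro a ⟨-, haK⟩ b ⟨-, hbK⟩ c ⟨hcC, -⟩
  have hab : ⁅a, b⁆ ∈ N := by
    simpa only [QuotientGroup.ker_mk'] using
      (QuotientGroup.mk' N).commutatorElement_mem_ker (hKab _ haK _ hbK)
  exact Subgroup.mem_centralizer_iff.mp hcC _ hab
end

section
/- Let G be a finitely generated group with a finite normal subgroup N such that the quotient G/N is virtually abelian. Then G is virtually abelian. -/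
/-!
Pull the abelian finite-index subgroup `K` of `G/N` back to `H ≤ G`. Since `K` is abelian,
every commutator of `H` lies in the finite group `N`, so `H` has only finitely many commutators.
As `H` has finite index in `G`, it has a finite generating set `S`, and `g ↦ ([g, s])_{s ∈ S}`
embeds `H / Z(H)` into a finite set. So the center of `H` is abelian of finite index in `G`.
-/

open scoped commutatorElement

namespace Subgroup

variable {G Q : Type*} [Group G] [Group Q]

theorem finiteIndex_comap_of_surjective {f : G →* Q} (hf : Function.Surjective f)
    (K : Subgroup Q) [K.FiniteIndex] : (K.comap f).FiniteIndex :=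
  ⟨by rw [index_comap_of_surjective K hf]; exact FiniteIndex.index_ne_zero⟩

theorem finiteIndex_map_subtype {H : Subgroup G} [H.FiniteIndex] (A : Subgroup H)
    [A.FiniteIndex] : (A.map H.subtype).FiniteIndex :=
  ⟨by
    rw [index_map_subtype]
    exact mul_ne_zero FiniteIndex.index_ne_zero FiniteIndex.index_ne_zero⟩

theorem commutatorElement_mem_ker_of_mem_comap (f : G →* Q) (K : Subgroup Q)
    [IsMulCommutative K] {a b : G} (ha : a ∈ K.comap f) (hb : b ∈ K.comap f) :
    ⁅a, b⁆ ∈ f.ker := by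
  rw [MonoidHom.mem_ker, map_commutatorElement, commutatorElement_eq_one_iff_mul_comm]
  exact setLike_mul_comm (mem_comap.mp ha) (mem_comap.mp hb)

theorem finite_commutatorSet_comap (f : G →* Q) (hf : (f.ker : Set G).Finite) (K : Subgroup Q)
    [IsMulCommutative K] : Finite (commutatorSet (K.comap f)) := by
  have hsub : (K.comap f).subtype '' commutatorSet (K.comap f) ⊆ f.ker := by
    rintro _ ⟨_, ⟨a, b, rfl⟩, rfl⟩
    exact commutatorElement_mem_ker_of_mem_comap f K a.2 b.2
  exact ((hf.subset hsub).of_finite_image (subtype_injective _).injOn).to_subtype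

end Subgroup

/-- **Lemma (finite-by-(virtually abelian)).** If a finitely generated group `G` has a
finite normal subgroup `N` with `G/N` virtually abelian, then `G` is virtually
abelian. -/
theorem virtually_abelian_of_finite_by_virtually_abelian {G : Type*} [Group G]
    (hFG : Group.FG G) (N : Subgroup G) [N.Normal] (hN : (N : Set G).Finite)
    (hK : ∃ K : Subgroup (G ⧸ N), K.FiniteIndex ∧ ∀ a ∈ K, ∀ b ∈ K, a * b = b * a) :
    ∃ H : Subgroup G, H.FiniteIndex ∧ ∀ a ∈ H, ∀ b ∈ H, a * b = b * a := by
  obtain ⟨K, hKfi, hKab⟩ := hK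
  have : IsMulCommutative K := .of_setLike_mul_comm hKab
  set H := K.comap (QuotientGroup.mk' N)
  have : H.FiniteIndex :=
    Subgroup.finiteIndex_comap_of_surjective (QuotientGroup.mk'_surjective N) K
  have : Finite (commutatorSet H) :=
    Subgroup.finite_commutatorSet_comap _ (by rwa [QuotientGroup.ker_mk']) K
  exact ⟨(Subgroup.center H).map H.subtype, Subgroup.finiteIndex_map_subtype _,
    isMulCommutative_iff_of_setLike.mp inferInstance⟩
end

section
/- Let G be a finitely generated group. Then G is infinite if and only if the set of squares {g² : g ∈ G} is infinite. -/
/-! If the set of squares of `G` is finite, it is a finite conjugation-invariant set, so its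
centralizer `C` has finite index; thus `C` is finitely generated (Schreier) and its squares are
central in `C`. In such a group the squares generate a finite central subgroup `M` (finitely many
commuting elements of finite order), and `C ⧸ M` has exponent two, hence is abelian; being
finitely generated and torsion, it is finite too. -/

open Subgroup
open scoped IsMulCommutative

section

variable {G : Type*} [Group G]

theorem isOfFinOrder_pow_of_finite_range_pow {M : Type*} [LeftCancelMonoid M] {n : ℕ}
    (h : (Set.range fun x : M => x ^ n).Finite) (x : M) : IsOfFinOrder (x ^ n) := by
  rw [← finite_powers]
  refine h.subset ?_
  rintro _ ⟨k, rfl⟩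
  exact ⟨x ^ k, pow_right_comm x k n⟩

theorem setOf_isConj_pow_subset_range_pow (g : G) (n : ℕ) :
    {t | IsConj (g ^ n) t} ⊆ Set.range fun x : G => x ^ n := by
  rintro _ h
  obtain ⟨c, rfl⟩ := isConj_iff.1 h
  exact ⟨c * g * c⁻¹, conj_pow⟩

namespace Subgroup

theorem finiteIndex_centralizer_singleton {g : G} (hg : {t | IsConj g t}.Finite) :
    (centralizer {g}).FiniteIndex := by
  refine ⟨?_⟩
  rw [centralizer_eq_comap_stabilizer]
  refine (index_comap_of_surjective (H := MulAction.stabilizer (ConjAct G) g)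
    ConjAct.toConjAct.surjective).trans_ne ?_
  rw [MulAction.index_stabilizer]
  refine Set.ncard_ne_zero_of_mem (MulAction.mem_orbit_self g) (hg.subset fun t ht => ?_)
  exact (ConjAct.mem_orbit_conjAct.1 ht).symm

theorem finiteIndex_centralizer {S : Set G} (hS : S.Finite)
    (hconj : ∀ s ∈ S, {t | IsConj s t}.Finite) : (centralizer S).FiniteIndex := by
  rw [centralizer_eq_iInf, iInf_subtype']
  have := hS.to_subtype
  exact finiteIndex_iInf fun s => finiteIndex_centralizer_singleton (hconj s s.2)

theorem isOfFinOrder_of_mem_closure {S : Set G} (hcent : S ⊆ center G)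
    (htors : ∀ x ∈ S, IsOfFinOrder x) {x : G} (hx : x ∈ closure S) : IsOfFinOrder x := by
  have hM : closure S ≤ center G := (closure_le _).2 hcent
  induction hx using closure_induction with
  | mem x hx => exact htors x hx
  | one => exact IsOfFinOrder.one
  | mul x y hx hy ihx ihy =>
    exact Commute.isOfFinOrder_mul (mem_center_iff.1 (hM hy) x) ihx ihy
  | inv x _ ihx => exact ihx.inv

theorem finite_closure_of_subset_center {S : Set G} (hS : S.Finite) (hcent : S ⊆ center G)
    (htors : ∀ x ∈ S, IsOfFinOrder x) : Finite (closure S) := by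
  have hcomm : ∀ x ∈ S, ∀ y ∈ S, x * y = y * x := fun x _ y hy => mem_center_iff.1 (hcent hy) x
  have := isMulCommutative_closure hcomm
  have := hS.to_subtype
  exact CommGroup.finite_of_fg_isMulTorsion _ fun x =>
    (closure S).subtype_injective.isOfFinOrder_iff.1 (isOfFinOrder_of_mem_closure hcent htors x.2)

end Subgroup

theorem Group.finite_of_fg_of_sq_eq_one [Group.FG G] (h : ∀ g : G, g ^ 2 = 1) : Finite G := by
  let : CommGroup G :=
    { mul_comm := Commute.of_orderOf_dvd_two fun g => orderOf_dvd_of_pow_eq_one (h g) }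
  exact CommGroup.finite_of_fg_isMulTorsion G fun g =>
    isOfFinOrder_iff_pow_eq_one.2 ⟨2, two_pos, h g⟩

theorem Group.finite_of_fg_of_finite_range_sq_subset_center [Group.FG G]
    (hfin : (Set.range fun g : G => g ^ 2).Finite)
    (hcent : (Set.range fun g : G => g ^ 2) ⊆ center G) : Finite G := by
  set M := closure (Set.range fun g : G => g ^ 2)
  have hM : M ≤ center G := (closure_le _).2 hcent
  have : M.Normal := ⟨fun n hn g => by rwa [mem_center_iff.1 (hM hn) g, mul_inv_cancel_right]⟩
  have : Finite M := finite_closure_of_subset_center hfin hcent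
    (Set.forall_mem_range.2 (isOfFinOrder_pow_of_finite_range_pow hfin))
  have : Finite (G ⧸ M) := Group.finite_of_fg_of_sq_eq_one fun q =>
    QuotientGroup.induction_on q fun g => (QuotientGroup.eq_one_iff _).2 (subset_closure ⟨g, rfl⟩)
  have := M.finiteIndex_of_finite_quotient
  exact M.finite_iff_finite_and_finiteIndex.2 ⟨‹_›, ‹_›⟩

theorem Group.finite_of_fg_of_finite_range_sq [Group.FG G]
    (h : (Set.range fun g : G => g ^ 2).Finite) : Finite G := by
  set C := centralizer (Set.range fun g : G => g ^ 2)
  have : C.FiniteIndex := finiteIndex_centralizer h <| Set.forall_mem_range.2 fun g =>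
    h.subset (setOf_isConj_pow_subset_range_pow g 2)
  have hfinC : (Set.range fun c : C => c ^ 2).Finite :=
    (h.preimage Subtype.val_injective.injOn).subset (Set.range_subset_iff.2 fun c => ⟨c, rfl⟩)
  have hcentC : (Set.range fun c : C => c ^ 2) ⊆ center C :=
    Set.range_subset_iff.2 fun c => mem_center_iff.2 fun d => Subtype.ext (d.2 _ ⟨c, rfl⟩).symm
  -- Schreier's lemma `Subgroup.fg_of_index_ne_zero` supplies `Group.FG C` by instance search.
  have : Finite C := Group.finite_of_fg_of_finite_range_sq_subset_center hfinC hcentC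
  exact C.finite_iff_finite_and_finiteIndex.2 ⟨‹_›, ‹_›⟩

end

/-- **Corollary.** A finitely generated group `G` is infinite if and only if its set of
squares `{g² : g ∈ G}` is infinite. -/
theorem infinite_iff_infinitely_many_squares {G : Type*} [Group G] (hFG : Group.FG G) :
    Infinite G ↔ {x : G | ∃ g : G, g ^ 2 = x}.Infinite := by
  refine ⟨fun hG hfin => ?_, fun h => Set.infinite_univ_iff.1 (h.mono (Set.subset_univ _))⟩
  exact not_finite_iff_infinite.2 hG (Group.finite_of_fg_of_finite_range_sq hfin)
end

section
/- Let G be a finitely generated group, s ∈ G, let H₁,…,H_m be subgroups of G and a₁,…,a_m ∈ G, and assume that G = sq⁻¹(1) ∪ s·sq⁻¹(1) ∪ a₁H₁ ∪ … ∪ a_mH_m. Let α = Σᵢ 1/[G:Hᵢ], where 1/[G:Hᵢ] is interpreted as 0 when Hᵢ has infinite index. If α < (3−√5)/4, then either G is virtually abelian, or the conjugacy class of s² in G is finite of cardinality less than 4/(3−√5−4α)². -/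
open scoped Pointwise

section Aux

variable {G : Type*} [Group G]

/-- If `x` is an involution and `x * t` is an involution, then `x` inverts `t`. -/
private lemma aux_invert (x t : G) (hx : x ^ 2 = 1) (h : (x * t) ^ 2 = 1) :
    x * t * x⁻¹ = t⁻¹ := by
  have hxi : x⁻¹ = x := by
    rw [pow_two] at hx
    exact inv_eq_of_mul_eq_one_right hx
  have h' : (x * t * x) * t = 1 := by
    calc (x * t * x) * t = (x * t) * (x * t) := by group
    _ = 1 := by rw [← pow_two]; exact h
  rw [hxi]
  exact eq_inv_of_mul_eq_one_left h'

/-- If `x` is an involution and `s⁻¹ * (x * s²)` is an involution, then `x` inverts `s²`. -/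
private lemma aux_invert' (x s : G) (hx : x ^ 2 = 1) (h : (s⁻¹ * (x * s ^ 2)) ^ 2 = 1) :
    x * s ^ 2 * x⁻¹ = (s ^ 2)⁻¹ := by
  have h1 : (x * s) ^ 2 = 1 := by
    have : (x * s) ^ 2 = s * (s⁻¹ * (x * s ^ 2)) ^ 2 * s⁻¹ := by
      simp only [pow_two, mul_assoc, mul_inv_cancel_left, inv_mul_cancel_left,
        mul_inv_cancel, mul_one]
    rw [this, h, mul_one, mul_inv_cancel]
  have hs : x * s * x⁻¹ = s⁻¹ := aux_invert x s hx h1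
  calc x * s ^ 2 * x⁻¹ = (x * s * x⁻¹) * (x * s * x⁻¹) := by
        simp only [pow_two, mul_assoc, inv_mul_cancel_left]
  _ = s⁻¹ * s⁻¹ := by rw [hs]
  _ = (s ^ 2)⁻¹ := by group

/-- If `u` and `x` both invert `s²`, then `u⁻¹ * x` centralizes `s²`. -/
private lemma aux_centralizer (u x s : G) (hu : u * s ^ 2 * u⁻¹ = (s ^ 2)⁻¹)
    (hx : x * s ^ 2 * x⁻¹ = (s ^ 2)⁻¹) :
    u⁻¹ * x ∈ Subgroup.centralizer {s ^ 2} := by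
  rw [Subgroup.mem_centralizer_iff]
  intro h hh
  rw [Set.mem_singleton_iff] at hh
  subst hh
  have h1 : s ^ 2 * u⁻¹ = u⁻¹ * (s ^ 2)⁻¹ := by rw [← hu]; group
  have h2 : (s ^ 2)⁻¹ * x = x * s ^ 2 := by rw [← hx]; group
  calc s ^ 2 * (u⁻¹ * x) = (s ^ 2 * u⁻¹) * x := by group
  _ = u⁻¹ * ((s ^ 2)⁻¹ * x) := by rw [h1]; group
  _ = u⁻¹ * (x * s ^ 2) := by rw [h2]
  _ = u⁻¹ * x * s ^ 2 := by group

end Aux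

/-- **Lemma (part 1).** Suppose a finitely generated group `G` is covered as
`G = sq⁻¹(1) ∪ s·sq⁻¹(1) ∪ a₁H₁ ∪ … ∪ a_mH_m`, and let `α = Σᵢ 1/[G:Hᵢ]`
(with `1/∞ = 0`; in Mathlib, infinite index is `index = 0` and `(0:ℝ)⁻¹ = 0`).
If `α < (3 − √5)/4`, then either `G` is virtually abelian, or the conjugacy class of
`s²` is finite of cardinality less than `4/(3 − √5 − 4α)²`. -/
theorem cover_by_involutions_and_cosets_small_alpha {G : Type*} [Group G]
    (hFG : Group.FG G) (s : G) (m : ℕ) (H : Fin m → Subgroup G) (a : Fin m → G)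
    (hcover : ∀ g : G, g ^ 2 = 1 ∨ (s⁻¹ * g) ^ 2 = 1 ∨ ∃ i, (a i)⁻¹ * g ∈ H i)
    (hα : ∑ i, ((H i).index : ℝ)⁻¹ < (3 - Real.sqrt 5) / 4) :
    (∃ K : Subgroup G, K.FiniteIndex ∧ ∀ x ∈ K, ∀ y ∈ K, x * y = y * x) ∨
      ({x : G | ∃ g : G, g * s ^ 2 * g⁻¹ = x}.Finite ∧
        (Nat.card {x : G | ∃ g : G, g * s ^ 2 * g⁻¹ = x} : ℝ) <
          4 / (3 - Real.sqrt 5 - 4 * ∑ i, ((H i).index : ℝ)⁻¹) ^ 2) := by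
  classical
  set r : ℝ := Real.sqrt 5 with hr
  have hr2 : (2 : ℝ) ≤ r := by
    nlinarith [Real.sq_sqrt (by norm_num : (0:ℝ) ≤ 5), Real.sqrt_nonneg 5]
  have hr5 : r ^ 2 = 5 := Real.sq_sqrt (by norm_num)
  set A : ℝ := ∑ i, ((H i).index : ℝ)⁻¹ with hA
  have hA0 : 0 ≤ A := Finset.sum_nonneg (fun i _ => by positivity)
  -- the conjugate subgroups `s² Hᵢ s⁻²`
  set Hc : Fin m → Subgroup G :=
    fun i => (H i).comap (MulAut.conj ((s ^ 2)⁻¹) : G ≃* G).toMonoidHom with hHc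
  have hHc_mem : ∀ (i : Fin m) (x : G), x ∈ Hc i ↔ (s ^ 2)⁻¹ * x * s ^ 2 ∈ H i := by
    intro i x
    simp only [hHc, Subgroup.mem_comap, MulEquiv.coe_toMonoidHom, MulAut.conj_apply, inv_inv]
  have hHc_index : ∀ i, (Hc i).index = (H i).index := by
    intro i
    exact Subgroup.index_comap_of_surjective _
      (MulEquiv.surjective (MulAut.conj ((s ^ 2)⁻¹)))
  -- key consequence of the covering for involutions
  have keyE : ∀ x : G, x ^ 2 = 1 →
      (x * s ^ 2 * x⁻¹ = (s ^ 2)⁻¹) ∨ ∃ i, (a i * (s ^ 2)⁻¹)⁻¹ * x ∈ Hc i := by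
    intro x hx
    rcases hcover (x * s ^ 2) with h | h | ⟨i, hi⟩
    · exact Or.inl (aux_invert x (s ^ 2) hx h)
    · exact Or.inl (aux_invert' x s hx h)
    · refine Or.inr ⟨i, ?_⟩
      rw [hHc_mem]
      have : (s ^ 2)⁻¹ * ((a i * (s ^ 2)⁻¹)⁻¹ * x) * s ^ 2 = (a i)⁻¹ * (x * s ^ 2) := by
        group
      rw [this]
      exact hi
  by_cases hU : ∃ u : G, u ^ 2 = 1 ∧ u * s ^ 2 * u⁻¹ = (s ^ 2)⁻¹
  · -- main case: there is an involution inverting `s²`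
    obtain ⟨u, hu1, hu2⟩ := hU
    set C : Subgroup G := Subgroup.centralizer {s ^ 2} with hC
    -- the coset covering of `G`
    set k : (Unit ⊕ Unit) ⊕ (Fin m ⊕ (Fin m ⊕ Fin m)) → Subgroup G := Sum.elim (fun _ => C) (Sum.elim H (Sum.elim Hc Hc)) with hk
    set b : (Unit ⊕ Unit) ⊕ (Fin m ⊕ (Fin m ⊕ Fin m)) → G :=
      Sum.elim (Sum.elim (fun _ => u) (fun _ => s * u))
      (Sum.elim a (Sum.elim (fun i => a i * (s ^ 2)⁻¹) (fun i => s * (a i * (s ^ 2)⁻¹))))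
      with hb
    have hcovers : ⋃ i ∈ Finset.univ, b i • (k i : Set G) = Set.univ := by
      rw [Set.eq_univ_iff_forall]
      intro x
      simp only [Set.mem_iUnion, Finset.mem_univ, exists_true_left]
      rcases hcover x with hx | hx | ⟨i, hi⟩
      · rcases keyE x hx with h | ⟨i, hi⟩
        · exact ⟨Sum.inl (Sum.inl ()), by
            simp only [hb, hk, Sum.elim_inl]
            exact (mem_leftCoset_iff u).mpr (aux_centralizer u x s hu2 h)⟩
        · exact ⟨Sum.inr (Sum.inr (Sum.inl i)), by
            simp only [hb, hk, Sum.elim_inr, Sum.elim_inl]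
            exact (mem_leftCoset_iff _).mpr hi⟩
      · rcases keyE (s⁻¹ * x) hx with h | ⟨i, hi⟩
        · refine ⟨Sum.inl (Sum.inr ()), ?_⟩
          simp only [hb, hk, Sum.elim_inl, Sum.elim_inr]
          refine (mem_leftCoset_iff _).mpr ?_
          have : (s * u)⁻¹ * x = u⁻¹ * (s⁻¹ * x) := by group
          rw [this]
          exact aux_centralizer u (s⁻¹ * x) s hu2 h
        · refine ⟨Sum.inr (Sum.inr (Sum.inr i)), ?_⟩
          simp only [hb, hk, Sum.elim_inr]
          refine (mem_leftCoset_iff _).mpr ?_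
          have : (s * (a i * (s ^ 2)⁻¹))⁻¹ * x = (a i * (s ^ 2)⁻¹)⁻¹ * (s⁻¹ * x) := by
            group
          rw [this]
          exact hi
      · exact ⟨Sum.inr (Sum.inl i), by
          simp only [hb, hk, Sum.elim_inr, Sum.elim_inl]
          exact (mem_leftCoset_iff _).mpr hi⟩
    have hsumQ := Subgroup.one_le_sum_inv_index_of_leftCoset_cover hcovers
    have h3 : ∑ i : Fin m, (((Hc i).index : ℚ))⁻¹ = ∑ i : Fin m, (((H i).index : ℚ))⁻¹ :=
      Finset.sum_congr rfl (fun i _ => by rw [hHc_index i])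
    have hsum_eq : ∑ i, ((k i).index : ℚ)⁻¹ =
        2 * ((C.index : ℚ))⁻¹ + 3 * ∑ i, ((H i).index : ℚ)⁻¹ := by
      simp only [hk, Fintype.sum_sum_type, Sum.elim_inl, Sum.elim_inr, Fintype.sum_unique]
      rw [h3]
      ring
    rw [hsum_eq] at hsumQ
    -- pass to the reals
    have hsumR : (1 : ℝ) ≤ 2 * ((C.index : ℝ))⁻¹ + 3 * A := by
      have := (Rat.cast_le (K := ℝ)).mpr hsumQ
      push_cast at this
      simpa [hA] using this
    -- the index of the centralizer is finite and small
    have hn0 : C.index ≠ 0 := by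
      intro h0
      rw [h0] at hsumR
      simp only [Nat.cast_zero, inv_zero, mul_zero, zero_add] at hsumR
      nlinarith [hα, hA0]
    have hn1 : (1 : ℝ) ≤ (C.index : ℝ) := by
      exact_mod_cast Nat.one_le_iff_ne_zero.mpr hn0
    have hnpos : (0 : ℝ) < (C.index : ℝ) := by linarith
    have hninv : (C.index : ℝ) * (C.index : ℝ)⁻¹ = 1 := mul_inv_cancel₀ (by positivity)
    have hn2 : (C.index : ℝ) * (1 - 3 * A) ≤ 2 := by nlinarith [hsumR]
    have hd : 0 < 3 - r - 4 * A := by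
      rw [hA, hr]; linarith [hα]
    -- identify the conjugacy class with the orbit of the conjugation action
    have hSorb : {x : G | ∃ g : G, g * s ^ 2 * g⁻¹ = x} =
        MulAction.orbit (ConjAct G) (s ^ 2) := by
      ext x
      constructor
      · rintro ⟨g, rfl⟩
        exact MulAction.mem_orbit_iff.mpr ⟨ConjAct.toConjAct g, by
          rw [ConjAct.smul_def, ConjAct.ofConjAct_toConjAct]⟩
      · intro hx
        obtain ⟨c, hc⟩ := MulAction.mem_orbit_iff.mp hx
        exact ⟨ConjAct.ofConjAct c, by rw [ConjAct.smul_def] at hc; exact hc⟩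
    have hCstab : C.index = (MulAction.stabilizer (ConjAct G) (s ^ 2)).index := by
      rw [hC, Subgroup.centralizer_eq_comap_stabilizer]
      exact Subgroup.index_comap_of_surjective _ (MulEquiv.surjective ConjAct.toConjAct)
    have hcard : Nat.card {x : G | ∃ g : G, g * s ^ 2 * g⁻¹ = x} = C.index := by
      rw [hSorb, Nat.card_coe_set_eq, ← MulAction.index_stabilizer, hCstab]
    have hfin : {x : G | ∃ g : G, g * s ^ 2 * g⁻¹ = x}.Finite := by
      rw [← Set.finite_coe_iff]
      exact Nat.finite_of_card_ne_zero (by rw [hcard]; exact hn0)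
    refine Or.inr ⟨hfin, ?_⟩
    rw [hcard]
    rw [lt_div_iff₀ (by positivity)]
    -- final numerical estimate
    have h2 : (3 - r - 4 * A) ^ 2 < 2 * (1 - 3 * A) := by
      nlinarith [mul_nonneg hA0 hd.le, mul_pos (show (0:ℝ) < 4 * r - 6 by linarith) hd,
        hr5, sq_nonneg (3 - r - 4 * A)]
    calc (C.index : ℝ) * (3 - r - 4 * A) ^ 2
        < (C.index : ℝ) * (2 * (1 - 3 * A)) := by
          exact mul_lt_mul_of_pos_left h2 hnpos
      _ = 2 * ((C.index : ℝ) * (1 - 3 * A)) := by ring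
      _ ≤ 4 := by linarith [hn2]
  · -- degenerate case: no involution inverts `s²`; then the cosets alone cover `G`,
    -- contradicting `α < (3 − √5)/4 < 1/3`.
    exfalso
    set k : Fin m ⊕ (Fin m ⊕ Fin m) → Subgroup G := Sum.elim H (Sum.elim Hc Hc) with hk
    set b : Fin m ⊕ (Fin m ⊕ Fin m) → G :=
      Sum.elim a (Sum.elim (fun i => a i * (s ^ 2)⁻¹) (fun i => s * (a i * (s ^ 2)⁻¹)))
      with hb
    have hcovers : ⋃ i ∈ Finset.univ, b i • (k i : Set G) = Set.univ := by
      rw [Set.eq_univ_iff_forall]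
      intro x
      simp only [Set.mem_iUnion, Finset.mem_univ, exists_true_left]
      rcases hcover x with hx | hx | ⟨i, hi⟩
      · rcases keyE x hx with h | ⟨i, hi⟩
        · exact absurd ⟨x, hx, h⟩ hU
        · exact ⟨Sum.inr (Sum.inl i), by
            simp only [hb, hk, Sum.elim_inr, Sum.elim_inl]
            exact (mem_leftCoset_iff _).mpr hi⟩
      · rcases keyE (s⁻¹ * x) hx with h | ⟨i, hi⟩
        · exact absurd ⟨s⁻¹ * x, hx, h⟩ hU
        · refine ⟨Sum.inr (Sum.inr i), ?_⟩
          simp only [hb, hk, Sum.elim_inr]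
          refine (mem_leftCoset_iff _).mpr ?_
          have : (s * (a i * (s ^ 2)⁻¹))⁻¹ * x = (a i * (s ^ 2)⁻¹)⁻¹ * (s⁻¹ * x) := by
            group
          rw [this]
          exact hi
      · exact ⟨Sum.inl i, by
          simp only [hb, hk, Sum.elim_inl]
          exact (mem_leftCoset_iff _).mpr hi⟩
    have hsumQ := Subgroup.one_le_sum_inv_index_of_leftCoset_cover hcovers
    have h3 : ∑ i : Fin m, (((Hc i).index : ℚ))⁻¹ = ∑ i : Fin m, (((H i).index : ℚ))⁻¹ :=
      Finset.sum_congr rfl (fun i _ => by rw [hHc_index i])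
    have hsum_eq : ∑ i, ((k i).index : ℚ)⁻¹ =
        3 * ∑ i, ((H i).index : ℚ)⁻¹ := by
      simp only [hk, Fintype.sum_sum_type, Sum.elim_inl, Sum.elim_inr]
      rw [h3]
      ring
    rw [hsum_eq] at hsumQ
    have hsumR : (1 : ℝ) ≤ 3 * A := by
      have := (Rat.cast_le (K := ℝ)).mpr hsumQ
      push_cast at this
      simpa [hA] using this
    nlinarith [hα, hA0]
end

section
/- Let G be a finitely generated group, s ∈ G with s² = 1, let H₁,…,H_m be subgroups of G and a₁,…,a_m ∈ G, and assume that G = sq⁻¹(1) ∪ s·sq⁻¹(1) ∪ a₁H₁ ∪ … ∪ a_mH_m. Let α = Σᵢ 1/[G:Hᵢ], where 1/[G:Hᵢ] is interpreted as 0 when Hᵢ has infinite index. If α < (1−α)³/24 (in particular if α ≤ 0.035), then G is virtually abelian. -/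
open Subgroup

open scoped Pointwise

namespace CoverInvolutionAux

variable {G : Type*} [Group G]

/-- The FC-center: elements with finite-index centralizer. -/
def fcCenter (G : Type*) [Group G] : Subgroup G where
  carrier := {g | (Subgroup.centralizer {g}).FiniteIndex}
  one_mem' := by
    have h : Subgroup.centralizer ({1} : Set G) = ⊤ := by
      ext x; simp [Subgroup.mem_centralizer_singleton_iff]
    show (Subgroup.centralizer ({1} : Set G)).FiniteIndex
    rw [h]; infer_instance
  mul_mem' := by
    intro x y hx hy
    haveI : (Subgroup.centralizer {x}).FiniteIndex := hx
    haveI : (Subgroup.centralizer {y}).FiniteIndex := hy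
    show (Subgroup.centralizer {x * y}).FiniteIndex
    refine Subgroup.finiteIndex_of_le (H := Subgroup.centralizer {x} ⊓ Subgroup.centralizer {y}) ?_
    intro z hz
    rw [Subgroup.mem_inf] at hz
    obtain ⟨hzx, hzy⟩ := hz
    rw [Subgroup.mem_centralizer_singleton_iff] at hzx hzy ⊢
    exact (Commute.mul_right (hzx : Commute z x) (hzy : Commute z y))
  inv_mem' := by
    intro x hx
    haveI : (Subgroup.centralizer {x}).FiniteIndex := hx
    show (Subgroup.centralizer {x⁻¹}).FiniteIndex
    refine Subgroup.finiteIndex_of_le (H := Subgroup.centralizer {x}) ?_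
    intro z hz
    rw [Subgroup.mem_centralizer_singleton_iff] at hz ⊢
    exact (Commute.inv_right (hz : Commute z x))

lemma mem_fcCenter_iff {g : G} : g ∈ fcCenter G ↔ (Subgroup.centralizer {g}).FiniteIndex :=
  Iff.rfl

/-- conjugation invariance of the FC center -/
lemma conj_mem_fcCenter {g : G} (h : G) (hg : g ∈ fcCenter G) : h * g * h⁻¹ ∈ fcCenter G := by
  rw [mem_fcCenter_iff] at *
  have key : Subgroup.centralizer {h * g * h⁻¹} =
      (Subgroup.centralizer {g}).comap ((MulAut.conj h⁻¹).toMonoidHom) := by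
    ext z
    simp only [Subgroup.mem_comap, MulEquiv.coe_toMonoidHom, MulAut.conj_apply,
      Subgroup.mem_centralizer_singleton_iff, inv_inv]
    constructor
    · intro hz
      have := congrArg (fun w => h⁻¹ * w * h) hz
      simpa [mul_assoc] using this
    · intro hz
      have := congrArg (fun w => h * w * h⁻¹) hz
      simpa [mul_assoc] using this
  rw [key]
  constructor
  rw [Subgroup.index_comap_of_surjective _ (MulAut.conj h⁻¹).surjective]
  exact hg.index_ne_zero

lemma inv_pair_commute {v x y : G} (hx : x * v * x⁻¹ = v⁻¹) (hy : y * v * y⁻¹ = v⁻¹) :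
    (y⁻¹ * x) * v = v * (y⁻¹ * x) := by
  have hx' : x * v = v⁻¹ * x := by
    have h := congrArg (fun w => w * x) hx
    simpa [mul_assoc] using h
  have hy' : v * y⁻¹ = y⁻¹ * v⁻¹ := by
    have h := congrArg (fun w => y⁻¹ * w) hy
    simpa [mul_assoc] using h
  calc (y⁻¹ * x) * v = y⁻¹ * (x * v) := mul_assoc _ _ _
    _ = y⁻¹ * (v⁻¹ * x) := by rw [hx']
    _ = (y⁻¹ * v⁻¹) * x := (mul_assoc _ _ _).symm
    _ = (v * y⁻¹) * x := by rw [hy']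
    _ = v * (y⁻¹ * x) := mul_assoc _ _ _

lemma toolT (s : G) (hss : s * s = 1) {m : ℕ} (H : Fin m → Subgroup G) (a : Fin m → G)
    (hcov : ∀ g : G, g * g = 1 ∨ s * g * s = g⁻¹ ∨ ∃ i, (a i)⁻¹ * g ∈ H i)
    (hα : ∑ i, ((H i).index : ℚ)⁻¹ < 1/4)
    (v : G) (hv : s * v * s = v⁻¹) :
    (Subgroup.centralizer {v}).FiniteIndex ∨ (Subgroup.centralizer {v * s}).FiniteIndex ∨
      (Subgroup.centralizer {v⁻¹ * s}).FiniteIndex := by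
  classical
  by_contra hcon
  push_neg at hcon
  obtain ⟨hc1, hc2, hc3⟩ := hcon
  have i1 : (Subgroup.centralizer {v}).index = 0 := by
    by_contra h; exact hc1 ⟨h⟩
  have i2 : (Subgroup.centralizer {v * s}).index = 0 := by
    by_contra h; exact hc2 ⟨h⟩
  have i3 : (Subgroup.centralizer {v⁻¹ * s}).index = 0 := by
    by_contra h; exact hc3 ⟨h⟩
  have hs2 : ∀ x : G, s * (s * x) = x := fun x => by rw [← mul_assoc, hss, one_mul]
  -- choice of an inverting element
  set b₁ : G := if h : ∃ b : G, b * v * b⁻¹ = v⁻¹ then h.choose else 1 with hb₁def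
  have hex_imp : ∀ b : G, b * v * b⁻¹ = v⁻¹ → b₁ * v * b₁⁻¹ = v⁻¹ := by
    intro b hb
    have hex : ∃ b : G, b * v * b⁻¹ = v⁻¹ := ⟨b, hb⟩
    simp only [hb₁def, dif_pos hex]
    exact hex.choose_spec
  -- the covering family
  set Kc : Fin 5 → Subgroup G :=
    ![Subgroup.centralizer {v}, Subgroup.centralizer {v}, Subgroup.centralizer {v},
      Subgroup.centralizer {v * s}, Subgroup.centralizer {v⁻¹ * s}] with hKc
  set Kr : Fin 4 → Fin m → Subgroup G :=
    ![fun i => H i, fun i => H i, fun i => H i,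
      fun i => (H i).comap (MulAut.conj v⁻¹).toMonoidHom] with hKr
  set K : (Fin 5 ⊕ Fin 4 × Fin m) → Subgroup G :=
    Sum.elim Kc (fun p => Kr p.1 p.2) with hK
  set gc : Fin 5 → G := ![1, b₁, v⁻¹ * b₁, 1, v⁻¹] with hgc
  set gr : Fin 4 → Fin m → G :=
    ![fun i => a i, fun i => v⁻¹ * a i, fun i => v⁻¹ * (v⁻¹ * a i), fun i => a i * v⁻¹] with hgr
  set g : (Fin 5 ⊕ Fin 4 × Fin m) → G := Sum.elim gc (fun p => gr p.1 p.2) with hg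
  have hcovers : ⋃ j ∈ (Finset.univ : Finset (Fin 5 ⊕ Fin 4 × Fin m)),
      g j • (K j : Set G) = Set.univ := by
    rw [Set.eq_univ_iff_forall]
    intro b
    rw [Set.mem_iUnion₂]
    suffices h : ∃ j, b ∈ g j • (K j : Set G) by
      obtain ⟨j, hj⟩ := h
      exact ⟨j, Finset.mem_univ _, hj⟩
    rcases hcov b with hbE | hbV | ⟨i, hbU⟩
    · -- b is an involution
      have hbinv : b⁻¹ = b := inv_eq_of_mul_eq_one_right hbE
      rcases hcov (b * v) with h1 | h2 | ⟨i, h3⟩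
      · -- b * v is an involution : b inverts v
        have h' : (b * v)⁻¹ = b * v := inv_eq_of_mul_eq_one_right h1
        rw [mul_inv_rev, hbinv] at h'
        -- h' : v⁻¹ * b = b * v
        have hPb : b * v * b⁻¹ = v⁻¹ := by
          rw [hbinv]
          have h2 := congrArg (fun w => w * b) h'.symm
          simpa [mul_assoc, hbE] using h2
        refine ⟨Sum.inl 1, ?_⟩
        rw [mem_leftCoset_iff]
        show b₁⁻¹ * b ∈ Subgroup.centralizer {v}
        rw [Subgroup.mem_centralizer_singleton_iff]
        exact inv_pair_commute hPb (hex_imp b hPb)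
      · -- s * (b*v) * s = (b*v)⁻¹ : b centralizes v * s
        have e : s * b * s * v⁻¹ = v⁻¹ * b := by
          calc s * b * s * v⁻¹ = s * b * s * (s * v * s) := by rw [hv]
            _ = s * (b * v) * s := by simp [mul_assoc, hs2]
            _ = (b * v)⁻¹ := h2
            _ = v⁻¹ * b := by rw [mul_inv_rev, hbinv]
        have e2 : s * b * s = v⁻¹ * b * v := by
          have h4 := congrArg (fun w => w * v) e
          simpa [mul_assoc] using h4
        refine ⟨Sum.inl 3, ?_⟩
        rw [mem_leftCoset_iff]
        show (1 : G)⁻¹ * b ∈ Subgroup.centralizer {v * s}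
        rw [inv_one, one_mul, Subgroup.mem_centralizer_singleton_iff]
        -- goal : b * (v * s) = (v * s) * b
        have e3 := congrArg (fun w => v * w * s) e2
        simp only [mul_assoc] at e3
        rw [hss] at e3
        simp only [mul_one, mul_inv_cancel_left] at e3
        -- e3 : v * (s * b) = b * (v * s)
        rw [← e3, ← mul_assoc]
      · -- b * v in a coset
        refine ⟨Sum.inr (3, i), ?_⟩
        rw [mem_leftCoset_iff]
        show (a i * v⁻¹)⁻¹ * b ∈ (H i).comap (MulAut.conj v⁻¹).toMonoidHom
        rw [Subgroup.mem_comap]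
        have : (MulAut.conj v⁻¹).toMonoidHom ((a i * v⁻¹)⁻¹ * b) = (a i)⁻¹ * (b * v) := by
          simp [MulAut.conj_apply, mul_assoc]
        rw [this]
        exact h3
    · -- s * b * s = b⁻¹
      rcases hcov (v * b) with h1 | h2 | ⟨i, h3⟩
      · -- (v*b) is an involution; go deeper
        have hvbinv : (v * b)⁻¹ = v * b := inv_eq_of_mul_eq_one_right h1
        rcases hcov (v * (v * b)) with h4 | h5 | ⟨i, h6⟩
        · -- double involution: v*b inverts v
          have h' : (v * (v * b))⁻¹ = v * (v * b) := inv_eq_of_mul_eq_one_right h4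
          rw [mul_inv_rev, hvbinv] at h'
          -- h' : (v*b) * v⁻¹ = v * (v*b)
          have hP : (v * b) * v * (v * b)⁻¹ = v⁻¹ := by
            have h5 : (v * b) * v⁻¹ * (v * b)⁻¹ = v := by
              rw [h']; simp [mul_assoc]
            have h6 := congrArg Inv.inv h5
            simpa [mul_inv_rev, mul_assoc] using h6
          refine ⟨Sum.inl 2, ?_⟩
          rw [mem_leftCoset_iff]
          show (v⁻¹ * b₁)⁻¹ * b ∈ Subgroup.centralizer {v}
          have hrw : (v⁻¹ * b₁)⁻¹ * b = b₁⁻¹ * (v * b) := by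
            simp [mul_inv_rev, mul_assoc]
          rw [hrw, Subgroup.mem_centralizer_singleton_iff]
          exact inv_pair_commute hP (hex_imp _ hP)
        · -- s * (v*(v*b)) * s = (v*(v*b))⁻¹
          have e : v⁻¹ * (s * (v * b) * s) = (v * b) * v⁻¹ := by
            calc v⁻¹ * (s * (v * b) * s) = (s * v * s) * (s * (v * b) * s) := by rw [hv]
              _ = s * (v * (v * b)) * s := by simp [mul_assoc, hs2]
              _ = (v * (v * b))⁻¹ := h5
              _ = (v * b)⁻¹ * v⁻¹ := by rw [mul_inv_rev]
              _ = (v * b) * v⁻¹ := by rw [hvbinv]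
          have e2 : s * (v * b) * s = v * ((v * b) * v⁻¹) := by
            have h7 := congrArg (fun w => v * w) e
            simpa [mul_assoc] using h7
          refine ⟨Sum.inl 4, ?_⟩
          rw [mem_leftCoset_iff]
          show (v⁻¹)⁻¹ * b ∈ Subgroup.centralizer {v⁻¹ * s}
          rw [inv_inv, Subgroup.mem_centralizer_singleton_iff]
          -- goal : (v * b) * (v⁻¹ * s) = (v⁻¹ * s) * (v * b)
          have e5 := congrArg (fun w => v⁻¹ * w * s) e2
          simpa [mul_assoc, hss] using e5.symm
        · refine ⟨Sum.inr (2, i), ?_⟩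
          rw [mem_leftCoset_iff]
          show (v⁻¹ * (v⁻¹ * a i))⁻¹ * b ∈ H i
          have hrw : (v⁻¹ * (v⁻¹ * a i))⁻¹ * b = (a i)⁻¹ * (v * (v * b)) := by
            simp [mul_inv_rev, mul_assoc]
          rw [hrw]
          exact h6
      · -- s*(v*b)*s = (v*b)⁻¹ : v and b commute
        have e : v⁻¹ * b⁻¹ = b⁻¹ * v⁻¹ := by
          calc v⁻¹ * b⁻¹ = (s * v * s) * (s * b * s) := by rw [hv, hbV]
            _ = s * (v * b) * s := by simp [mul_assoc, hs2]
            _ = (v * b)⁻¹ := h2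
            _ = b⁻¹ * v⁻¹ := mul_inv_rev _ _
        refine ⟨Sum.inl 0, ?_⟩
        rw [mem_leftCoset_iff]
        show (1 : G)⁻¹ * b ∈ Subgroup.centralizer {v}
        rw [inv_one, one_mul, Subgroup.mem_centralizer_singleton_iff]
        have h8 := congrArg Inv.inv e
        simpa [mul_inv_rev] using h8
      · refine ⟨Sum.inr (1, i), ?_⟩
        rw [mem_leftCoset_iff]
        show (v⁻¹ * a i)⁻¹ * b ∈ H i
        have hrw : (v⁻¹ * a i)⁻¹ * b = (a i)⁻¹ * (v * b) := by
          simp [mul_inv_rev, mul_assoc]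
        rw [hrw]
        exact h3
    · refine ⟨Sum.inr (0, i), ?_⟩
      rw [mem_leftCoset_iff]
      exact hbU
  -- Apply B. H. Neumann's lemma
  have hsum := Subgroup.one_le_sum_inv_index_of_leftCoset_cover hcovers
  have hcomap : ∀ i : Fin m, ((H i).comap (MulAut.conj v⁻¹).toMonoidHom).index = (H i).index :=
    fun i => Subgroup.index_comap_of_surjective _ (MulAut.conj v⁻¹).surjective
  have hKsum : ∑ j : Fin 5 ⊕ Fin 4 × Fin m, ((K j).index : ℚ)⁻¹
      = 4 * ∑ i, ((H i).index : ℚ)⁻¹ := by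
    rw [Fintype.sum_sum_type]
    have hA : ∑ c : Fin 5, ((K (Sum.inl c)).index : ℚ)⁻¹ = 0 := by
      rw [Fin.sum_univ_five]
      show ((Kc 0).index : ℚ)⁻¹ + ((Kc 1).index : ℚ)⁻¹ + ((Kc 2).index : ℚ)⁻¹
        + ((Kc 3).index : ℚ)⁻¹ + ((Kc 4).index : ℚ)⁻¹ = 0
      have e0 : Kc 0 = Subgroup.centralizer {v} := rfl
      have e1 : Kc 1 = Subgroup.centralizer {v} := rfl
      have e2 : Kc 2 = Subgroup.centralizer {v} := rfl
      have e3 : Kc 3 = Subgroup.centralizer {v * s} := rfl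
      have e4 : Kc 4 = Subgroup.centralizer {v⁻¹ * s} := rfl
      rw [e0, e1, e2, e3, e4, i1, i2, i3]
      norm_num
    have hB : ∑ p : Fin 4 × Fin m, ((K (Sum.inr p)).index : ℚ)⁻¹
        = 4 * ∑ i, ((H i).index : ℚ)⁻¹ := by
      rw [Fintype.sum_prod_type]
      rw [Fin.sum_univ_four]
      have e0 : ∀ i : Fin m, K (Sum.inr ((0 : Fin 4), i)) = H i := fun _ => rfl
      have e1 : ∀ i : Fin m, K (Sum.inr ((1 : Fin 4), i)) = H i := fun _ => rfl
      have e2 : ∀ i : Fin m, K (Sum.inr ((2 : Fin 4), i)) = H i := fun _ => rfl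
      have e3 : ∀ i : Fin m, K (Sum.inr ((3 : Fin 4), i))
          = (H i).comap (MulAut.conj v⁻¹).toMonoidHom := fun _ => rfl
      simp only [e0, e1, e2, e3]
      have : ∑ i, (((H i).comap (MulAut.conj v⁻¹).toMonoidHom).index : ℚ)⁻¹
          = ∑ i, ((H i).index : ℚ)⁻¹ :=
        Finset.sum_congr rfl (fun i _ => by rw [hcomap i])
      rw [this]; ring
    rw [hA, hB, zero_add]
  rw [hKsum] at hsum
  linarith

/-- Every involution-or-inverted element lands in the FC-center up to `s`. -/
lemma step5 (s : G) (hss : s * s = 1) {m : ℕ} (H : Fin m → Subgroup G) (a : Fin m → G)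
    (hcov : ∀ g : G, g * g = 1 ∨ s * g * s = g⁻¹ ∨ ∃ i, (a i)⁻¹ * g ∈ H i)
    (hα : ∑ i, ((H i).index : ℚ)⁻¹ < 1/4)
    (g : G) (hg : g * g = 1 ∨ s * g * s = g⁻¹) :
    g ∈ fcCenter G ∨ s * g ∈ fcCenter G := by
  have hsinv : s⁻¹ = s := inv_eq_of_mul_eq_one_right hss
  rcases hg with hg | hg
  · -- involution case : apply toolT to v = s * g
    have hginv : g⁻¹ = g := inv_eq_of_mul_eq_one_right hg
    have hv : s * (s * g) * s = (s * g)⁻¹ := by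
      rw [mul_inv_rev, hginv, hsinv, ← mul_assoc, hss, one_mul]
    rcases toolT s hss H a hcov hα (s * g) hv with hc | hc | hc
    · exact Or.inr (mem_fcCenter_iff.mpr hc)
    · -- (s*g)*s ∈ fcCenter, conjugate back to g
      left
      have hmem : (s * g) * s ∈ fcCenter G := mem_fcCenter_iff.mpr hc
      have h2 := conj_mem_fcCenter s hmem
      have hrw : s * ((s * g) * s) * s⁻¹ = g := by
        rw [hsinv]
        calc s * (s * g * s) * s = s * (s * (g * (s * s))) := by
              simp only [mul_assoc]
          _ = g := by rw [hss, mul_one, ← mul_assoc, hss, one_mul]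
      rwa [hrw] at h2
    · -- (s*g)⁻¹ * s = g
      left
      have hrw : (s * g)⁻¹ * s = g := by
        rw [mul_inv_rev, hginv, hsinv, mul_assoc, hss, mul_one]
      rw [hrw] at hc
      exact mem_fcCenter_iff.mpr hc
  · -- inverted case : apply toolT to v = g
    rcases toolT s hss H a hcov hα g hg with hc | hc | hc
    · exact Or.inl (mem_fcCenter_iff.mpr hc)
    · right
      have hmem : g * s ∈ fcCenter G := mem_fcCenter_iff.mpr hc
      have h2 := conj_mem_fcCenter s hmem
      have hrw : s * (g * s) * s⁻¹ = s * g := by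
        rw [hsinv, mul_assoc, mul_assoc, hss, mul_one]
      rwa [hrw] at h2
    · right
      have hmem : g⁻¹ * s ∈ fcCenter G := mem_fcCenter_iff.mpr hc
      have h2 := (fcCenter G).inv_mem hmem
      have hrw : (g⁻¹ * s)⁻¹ = s * g := by
        rw [mul_inv_rev, inv_inv, hsinv]
      rwa [hrw] at h2

end CoverInvolutionAux

open CoverInvolutionAux in
/-- **Lemma (part 2).** Suppose a finitely generated group `G` is covered as
`G = sq⁻¹(1) ∪ s·sq⁻¹(1) ∪ a₁H₁ ∪ … ∪ a_mH_m` with `s` an involution, and let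
`α = Σᵢ 1/[G:Hᵢ]` (with `1/∞ = 0`; in Mathlib, infinite index is `index = 0` and
`(0:ℝ)⁻¹ = 0`). If `α < (1 − α)³/24`, then `G` is virtually abelian. -/
theorem cover_by_involutions_and_cosets_involution_case {G : Type*} [Group G]
    (hFG : Group.FG G) (s : G) (hs : s ^ 2 = 1)
    (m : ℕ) (H : Fin m → Subgroup G) (a : Fin m → G)
    (hcover : ∀ g : G, g ^ 2 = 1 ∨ (s⁻¹ * g) ^ 2 = 1 ∨ ∃ i, (a i)⁻¹ * g ∈ H i)
    (hα : ∑ i, ((H i).index : ℝ)⁻¹ <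
      (1 - ∑ i, ((H i).index : ℝ)⁻¹) ^ 3 / 24) :
    ∃ K : Subgroup G, K.FiniteIndex ∧ ∀ x ∈ K, ∀ y ∈ K, x * y = y * x := by
  classical
  have hss : s * s = 1 := by rw [← pow_two]; exact hs
  have hsinv : s⁻¹ = s := inv_eq_of_mul_eq_one_right hss
  have hcov : ∀ g : G, g * g = 1 ∨ s * g * s = g⁻¹ ∨ ∃ i, (a i)⁻¹ * g ∈ H i := by
    intro g
    rcases hcover g with h | h | h
    · left; rw [← pow_two]; exact h
    · right; left
      rw [hsinv, pow_two] at h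
      have h2 : (s * g * s) * g = 1 := by rw [mul_assoc (s * g) s g]; exact h
      exact mul_eq_one_iff_eq_inv.mp h2
    · right; right; exact h
  set α := ∑ i, ((H i).index : ℝ)⁻¹ with hαdef
  have hα0 : (0:ℝ) ≤ α := Finset.sum_nonneg fun i _ => by positivity
  have hα24 : α < 1/24 := by nlinarith [mul_nonneg hα0 (sq_nonneg (α - 3/2))]
  have hcast : ((∑ i, ((H i).index : ℚ)⁻¹ : ℚ) : ℝ) = α := by
    rw [hαdef]; push_cast; rfl
  have hαQ : ∑ i, ((H i).index : ℚ)⁻¹ < 1/4 := by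
    have h1 : ((∑ i, ((H i).index : ℚ)⁻¹ : ℚ) : ℝ) < ((1/4 : ℚ) : ℝ) := by
      rw [hcast]; push_cast; linarith
    exact_mod_cast h1
  have hstep : ∀ g : G,
      g ∈ fcCenter G ∨ s * g ∈ fcCenter G ∨ ∃ i, (a i)⁻¹ * g ∈ H i := by
    intro g
    rcases hcov g with h | h | h
    · rcases step5 s hss H a hcov hαQ g (Or.inl h) with h' | h'
      · exact Or.inl h'
      · exact Or.inr (Or.inl h')
    · rcases step5 s hss H a hcov hαQ g (Or.inr h) with h' | h'
      · exact Or.inl h'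
      · exact Or.inr (Or.inl h')
    · exact Or.inr (Or.inr h)
  have hFfi : (fcCenter G).FiniteIndex := by
    by_contra hF
    have iF : (fcCenter G).index = 0 := by by_contra h; exact hF ⟨h⟩
    set K2 : (Fin 2 ⊕ Fin m) → Subgroup G := Sum.elim ![fcCenter G, fcCenter G] H with hK2
    set g2 : (Fin 2 ⊕ Fin m) → G := Sum.elim ![1, s] a with hg2
    have hcovers2 : ⋃ j ∈ (Finset.univ : Finset (Fin 2 ⊕ Fin m)),
        g2 j • (K2 j : Set G) = Set.univ := by
      rw [Set.eq_univ_iff_forall]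
      intro b
      rw [Set.mem_iUnion₂]
      suffices h : ∃ j, b ∈ g2 j • (K2 j : Set G) by
        obtain ⟨j, hj⟩ := h
        exact ⟨j, Finset.mem_univ _, hj⟩
      rcases hstep b with h | h | ⟨i, h⟩
      · refine ⟨Sum.inl 0, ?_⟩
        rw [mem_leftCoset_iff]
        show (1:G)⁻¹ * b ∈ fcCenter G
        rwa [inv_one, one_mul]
      · refine ⟨Sum.inl 1, ?_⟩
        rw [mem_leftCoset_iff]
        show s⁻¹ * b ∈ fcCenter G
        rwa [hsinv]
      · refine ⟨Sum.inr i, ?_⟩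
        rw [mem_leftCoset_iff]
        exact h
    have hsum := Subgroup.one_le_sum_inv_index_of_leftCoset_cover hcovers2
    have hsum2 : ∑ j : Fin 2 ⊕ Fin m, ((K2 j).index : ℚ)⁻¹
        = ∑ i, ((H i).index : ℚ)⁻¹ := by
      rw [Fintype.sum_sum_type, Fin.sum_univ_two]
      have e0 : K2 (Sum.inl 0) = fcCenter G := rfl
      have e1 : K2 (Sum.inl 1) = fcCenter G := rfl
      have e2 : ∀ i, K2 (Sum.inr i) = H i := fun _ => rfl
      simp only [e0, e1, e2, iF]
      norm_num
    rw [hsum2] at hsum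
    linarith
  haveI := hFG
  haveI := hFfi
  have hFfg : (fcCenter G).FG := (Group.fg_iff_subgroup_fg _).mp inferInstance
  obtain ⟨S, hScl, hSfin⟩ := (Subgroup.fg_iff _).mp hFfg
  set T := hSfin.toFinset with hTdef
  have hTfc : ∀ x ∈ T, (Subgroup.centralizer {x}).FiniteIndex := by
    intro x hx
    have hxS : x ∈ S := hSfin.mem_toFinset.mp hx
    have hxF : x ∈ fcCenter G := by
      rw [← hScl]; exact Subgroup.subset_closure hxS
    exact hxF
  haveI hinf : (⨅ x ∈ T, Subgroup.centralizer {x}).FiniteIndex :=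
    Subgroup.finiteIndex_iInf' _ hTfc
  refine ⟨fcCenter G ⊓ ⨅ x ∈ T, Subgroup.centralizer {x}, inferInstance, ?_⟩
  intro x hx y hy
  rw [Subgroup.mem_inf] at hx hy
  have hyF : y ∈ Subgroup.closure S := by rw [hScl]; exact hy.1
  have hle : Subgroup.closure S ≤ Subgroup.centralizer {x} := by
    rw [Subgroup.closure_le]
    intro t ht
    have htT : t ∈ T := hSfin.mem_toFinset.mpr ht
    have hxc : x ∈ Subgroup.centralizer {t} := by
      have h2 := hx.2
      rw [Subgroup.mem_iInf] at h2
      have h3 := h2 t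
      rw [Subgroup.mem_iInf] at h3
      exact h3 htT
    rw [SetLike.mem_coe, Subgroup.mem_centralizer_singleton_iff]
    rw [Subgroup.mem_centralizer_singleton_iff] at hxc
    exact hxc.symm
  have hyx := hle hyF
  rw [Subgroup.mem_centralizer_singleton_iff] at hyx
  exact hyx.symm
end

section
/- Let G be a finitely generated group and μ a symmetric probability measure on G whose support is finite, generates G, and contains the identity. Let μ^{*n} denote the n-fold convolution power of μ, i.e., the distribution of the product X₁⋯Xₙ of n independent random elements each with law μ. If liminf_{n→∞} μ^{*n}({g ∈ G : g² = 1}) > (√5 − 1)/2, then G is virtually abelian. -/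
/-- Convolution powers of a finitely supported measure `μ` on a group `G`:
`convPow μ 1 = μ` and `convPow μ (n+1) (x) = Σ_g μ(g) · (convPow μ n)(g⁻¹x)`
(with `convPow μ 0` the Dirac mass at the identity). -/
noncomputable def convPow {G : Type*} [Group G] (μ : G →₀ ℝ) : ℕ → (G →₀ ℝ)
  | 0 => Finsupp.single 1 1
  | n + 1 => μ.sum fun g c => c • (convPow μ n).mapDomain (fun h => g * h)

/-- The mass a finitely supported measure `ν` gives to a set `A ⊆ G`. -/
noncomputable def measOf {G : Type*} (ν : G →₀ ℝ) (A : Set G) : ℝ :=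
  ν.sum fun g c => A.indicator (fun _ => c) g

/-!
If `x`, `y` and `xy` are involutions then `x` and `y` commute. Hence for independent `X ~ μ^s` and
`Y ~ μ^t` the probability that `Y` centralizes `X` is at least
`P(X² = 1) P(Y² = 1) + P((XY)² = 1) - 1`, which for large `s`, `t` exceeds `ε = α² + α - 1 > 0`,
where `(√5 - 1)/2 < α` lies below the liminf.

For a subgroup `H`, the return probabilities `μ^{2k}(H)` decrease to a limit `r(H)`
(`limReturnProb μ H`), and `r(H) > 0` forces `[G : H] < ∞`: the walk `ρₙ` on `G ⧸ H` satisfies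
`⟪ρₘ, ρₙ⟫ = μ^{m+n}(H)`, so `ρ_{2m}` converges pointwise to a nonzero square-summable function
invariant under two steps of the walk. It attains its maximum, so by the maximum principle (using
`1 ∈ supp μ`) it is constant, and a nonzero constant is square-summable only on a finite set.

By a reverse Markov inequality, the elements `x` whose centralizer `C(x)` has `r(C(x)) ≥ ε/2`
carry mass `≥ ε/2`, so they generate a finite-index subgroup all of whose elements have
finite-index centralizers. In the finitely generated group `G` this subgroup is finitely
generated, and intersecting it with the centralizers of its generators gives an abelian subgroup
of finite index.
-/

open Filter Topology

section Expect

variable {α β : Type*}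

noncomputable def expect (ν : α →₀ ℝ) (φ : α → ℝ) : ℝ :=
  Finsupp.linearCombination ℝ φ ν

structure IsProb (ν : α →₀ ℝ) : Prop where
  nonneg : ∀ x, 0 ≤ ν x
  sum_eq_one : ν.sum (fun _ c => c) = 1

lemma expect_eq_sum {ν : α →₀ ℝ} {s : Finset α} (hs : ν.support ⊆ s) (φ : α → ℝ) :
    expect ν φ = ∑ x ∈ s, ν x * φ x := by
  rw [expect, Finsupp.linearCombination_apply, Finsupp.sum_of_support_subset ν hs _ (by simp)]
  rfl

lemma expect_single (a : α) (c : ℝ) (φ : α → ℝ) : expect (Finsupp.single a c) φ = c * φ a := by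
  simp [expect]

lemma expect_mapDomain (ν : α →₀ ℝ) (π : α → β) (φ : β → ℝ) :
    expect (ν.mapDomain π) φ = expect ν (φ ∘ π) :=
  Finsupp.linearCombination_mapDomain ℝ π ν

lemma measOf_eq_expect (ν : α →₀ ℝ) (A : Set α) :
    measOf ν A = expect ν (A.indicator 1) := by
  rw [measOf, expect, Finsupp.linearCombination_apply]
  refine Finsupp.sum_congr fun g _ => ?_
  by_cases hg : g ∈ A <;> simp [hg]

lemma apply_eq_expect (ν : α →₀ ℝ) (a : α) : ν a = expect ν (({a} : Set α).indicator 1) := by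
  classical
  rw [expect_eq_sum (Finset.subset_insert a ν.support), Finset.sum_eq_single_of_mem a
    (Finset.mem_insert_self a _) fun x _ hx => by simp [hx]]
  simp

lemma expect_add (ν : α →₀ ℝ) (φ ψ : α → ℝ) :
    expect ν (fun x => φ x + ψ x) = expect ν φ + expect ν ψ := by
  simp only [expect_eq_sum subset_rfl, mul_add, Finset.sum_add_distrib]

lemma expect_sub (ν : α →₀ ℝ) (φ ψ : α → ℝ) :
    expect ν (fun x => φ x - ψ x) = expect ν φ - expect ν ψ := by
  simp only [expect_eq_sum subset_rfl, mul_sub, Finset.sum_sub_distrib]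

lemma expect_sub_left (f h : α →₀ ℝ) (φ : α → ℝ) :
    expect (f - h) φ = expect f φ - expect h φ :=
  map_sub _ f h

lemma expect_mul_const (ν : α →₀ ℝ) (φ : α → ℝ) (c : ℝ) :
    expect ν (fun x => φ x * c) = expect ν φ * c := by
  simp only [expect_eq_sum subset_rfl, ← mul_assoc, Finset.sum_mul]

lemma expect_comm (ν : α →₀ ℝ) (κ : β →₀ ℝ) (φ : α → β → ℝ) :
    expect ν (fun x => expect κ (φ x)) = expect κ (fun y => expect ν (φ · y)) := by
  simp only [expect_eq_sum subset_rfl, Finset.mul_sum]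
  rw [Finset.sum_comm]
  simp only [mul_left_comm]

lemma expect_coe_comm {f h : α →₀ ℝ} : expect f h = expect h f := by
  classical
  rw [expect_eq_sum (Finset.subset_union_left (s₂ := h.support)),
    expect_eq_sum (Finset.subset_union_right (s₁ := f.support))]
  simp only [mul_comm]

lemma expect_mono {ν : α →₀ ℝ} (hν : ∀ x, 0 ≤ ν x) {φ ψ : α → ℝ} (h : ∀ x, φ x ≤ ψ x) :
    expect ν φ ≤ expect ν ψ := by
  simp only [expect_eq_sum subset_rfl]
  exact Finset.sum_le_sum fun x _ => mul_le_mul_of_nonneg_left (h x) (hν x)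

lemma tendsto_expect (ν : α →₀ ℝ) {φ : ℕ → α → ℝ} {ψ : α → ℝ}
    (h : ∀ x, Tendsto (φ · x) atTop (𝓝 (ψ x))) :
    Tendsto (fun n => expect ν (φ n)) atTop (𝓝 (expect ν ψ)) := by
  simp only [expect_eq_sum subset_rfl]
  exact tendsto_finsetSum _ fun x _ => (h x).const_mul _

lemma sum_sq_le_expect_self (f : α →₀ ℝ) (s : Finset α) :
    ∑ x ∈ s, f x ^ 2 ≤ expect f f := by
  classical
  rw [expect_eq_sum (Finset.subset_union_right (s₁ := s))]
  simp only [← sq]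
  exact Finset.sum_le_sum_of_subset_of_nonneg Finset.subset_union_left fun x _ _ => sq_nonneg _

lemma expect_sub_self (f h : α →₀ ℝ) :
    expect (f - h) (f - h) = expect f f - 2 * expect f h + expect h h := by
  rw [show ⇑f - ⇑h = fun x => f x - h x from rfl, expect_sub, expect_sub_left, expect_sub_left,
    expect_coe_comm (f := h) (h := f)]
  ring

lemma sum_eq_expect_one (ν : α →₀ ℝ) : ν.sum (fun _ c => c) = expect ν fun _ => 1 := by
  simp [expect, Finsupp.linearCombination_apply]

lemma expect_injective {f h : α →₀ ℝ} (hfh : ∀ φ, expect f φ = expect h φ) : f = h := by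
  ext a
  rw [apply_eq_expect, apply_eq_expect, hfh]

lemma expect_comp_inv {G : Type*} [Group G] {μ : G →₀ ℝ} (hsym : ∀ g, μ g⁻¹ = μ g) (φ : G → ℝ) :
    expect μ (fun g => φ g⁻¹) = expect μ φ := by
  have hμ : μ.mapDomain (·⁻¹) = μ := by
    ext g
    rw [← inv_inv g, Finsupp.mapDomain_apply inv_injective, hsym, inv_inv]
  conv_rhs => rw [← hμ]
  rw [expect_mapDomain]
  rfl

namespace IsProb

variable {ν : α →₀ ℝ} (hν : IsProb ν)
include hν

lemma expect_const (c : ℝ) : expect ν (fun _ => c) = c := by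
  rw [expect_eq_sum subset_rfl, ← Finset.sum_mul]
  exact (congrArg (· * c) hν.sum_eq_one).trans (one_mul c)

lemma sq_expect_le (φ : α → ℝ) : expect ν φ ^ 2 ≤ expect ν (φ · ^ 2) := by
  simp only [expect_eq_sum subset_rfl]
  have h1 : ∑ x ∈ ν.support, ν x = 1 := hν.sum_eq_one
  exact (even_two.convexOn_pow).map_sum_le (fun x _ => hν.nonneg x) h1 (fun _ _ => Set.mem_univ _)

lemma measOf_nonneg (A : Set α) : 0 ≤ measOf ν A := by
  rw [measOf_eq_expect, ← hν.expect_const 0]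
  exact expect_mono hν.nonneg fun x => Set.indicator_nonneg (fun _ _ => zero_le_one) x

lemma measOf_le_one (A : Set α) : measOf ν A ≤ 1 := by
  rw [measOf_eq_expect, ← hν.expect_const 1]
  exact expect_mono hν.nonneg fun x => Set.indicator_le_self' (fun _ _ => zero_le_one) x

lemma measOf_add_measOf_le (A B : Set α) :
    measOf ν A + measOf ν B ≤ measOf ν (A ∩ B) + 1 := by
  have h : measOf ν A + measOf ν B = measOf ν (A ∪ B) + measOf ν (A ∩ B) := by
    simp only [measOf_eq_expect, ← expect_add, Set.indicator_union_add_inter_apply]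
  linarith [hν.measOf_le_one (A ∪ B)]

lemma measOf_mono {A B : Set α} (hAB : A ⊆ B) : measOf ν A ≤ measOf ν B := by
  simp only [measOf_eq_expect]
  exact expect_mono hν.nonneg (Set.indicator_le_indicator_of_subset hAB fun _ => zero_le_one)

lemma expect_le_measOf_add {φ : α → ℝ} (hφ : ∀ x, φ x ≤ 1) {t : ℝ} (ht : 0 ≤ t) :
    expect ν φ ≤ measOf ν {x | t ≤ φ x} + t := by
  calc expect ν φ ≤ expect ν fun x => {x | t ≤ φ x}.indicator 1 x + t :=
        expect_mono hν.nonneg fun x => ?_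
    _ = measOf ν {x | t ≤ φ x} + t := by rw [expect_add, hν.expect_const, measOf_eq_expect]
  by_cases hx : t ≤ φ x
  · rw [Set.indicator_of_mem (show x ∈ {x | t ≤ φ x} from hx), Pi.one_apply]
    linarith [hφ x]
  · rw [Set.indicator_of_notMem (show x ∉ {x | t ≤ φ x} from hx)]
    linarith

end IsProb

end Expect

section Walk

variable {G X Y : Type*} [Group G] [MulAction G X] [MulAction G Y] {μ : G →₀ ℝ}

noncomputable def markovOp (μ : G →₀ ℝ) (φ : X → ℝ) (x : X) : ℝ :=
  expect μ fun g => φ (g⁻¹ • x)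

noncomputable def walkStep (μ : G →₀ ℝ) (f : X →₀ ℝ) : X →₀ ℝ :=
  μ.sum fun g c => c • f.mapDomain (g • ·)

lemma convPow_succ (μ : G →₀ ℝ) (n : ℕ) : convPow μ (n + 1) = walkStep μ (convPow μ n) := rfl

lemma expect_walkStep (μ : G →₀ ℝ) (f : X →₀ ℝ) (φ : X → ℝ) :
    expect (walkStep μ f) φ = expect μ fun g => expect f fun x => φ (g • x) := by
  simp only [walkStep, expect, map_finsuppSum, map_smul, Finsupp.linearCombination_mapDomain]
  rw [Finsupp.linearCombination_apply]
  rfl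

lemma walkStep_apply (μ : G →₀ ℝ) (f : X →₀ ℝ) (x : X) :
    walkStep μ f x = markovOp μ f x := by
  rw [apply_eq_expect, expect_walkStep]
  congr 1; ext g
  rw [apply_eq_expect]
  congr 1; ext y
  classical
  simp only [Set.indicator_apply, Set.mem_singleton_iff, eq_inv_smul_iff, Pi.one_apply]

lemma coe_walkStep (μ : G →₀ ℝ) (f : X →₀ ℝ) : ⇑(walkStep μ f) = markovOp μ f :=
  funext (walkStep_apply μ f)

lemma mapDomain_walkStep (μ : G →₀ ℝ) (f : X →₀ ℝ) {π : X → Y}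
    (hπ : ∀ (g : G) x, π (g • x) = g • π x) :
    (walkStep μ f).mapDomain π = walkStep μ (f.mapDomain π) :=
  expect_injective fun φ => by simp only [expect_mapDomain, expect_walkStep, Function.comp_def, hπ]

lemma IsProb.walkStep (hμ : IsProb μ) {f : X →₀ ℝ} (hf : IsProb f) : IsProb (walkStep μ f) where
  nonneg x := by
    rw [walkStep_apply, ← (hμ.expect_const 0)]
    exact expect_mono hμ.nonneg fun g => hf.nonneg _
  sum_eq_one := by
    rw [sum_eq_expect_one, expect_walkStep]
    simp only [hf.expect_const, hμ.expect_const]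

lemma expect_walkStep_comm (hsym : ∀ g, μ g⁻¹ = μ g) (f h : X →₀ ℝ) :
    expect (walkStep μ f) h = expect f (walkStep μ h) := by
  rw [expect_walkStep, coe_walkStep]
  unfold markovOp
  rw [expect_comm f]
  conv_lhs => rw [← expect_comp_inv hsym]

lemma expect_walkStep_self_le (hμ : IsProb μ) (f : X →₀ ℝ) :
    expect (walkStep μ f) (walkStep μ f) ≤ expect f f := by
  classical
  -- Jensen: `(walkStep μ f)² ≤ walkStep μ (f * f)` pointwise, and `walkStep μ` preserves mass
  set S := (walkStep μ f).support ∪ (walkStep μ (f * f)).support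
  have hS₁ : (walkStep μ f).support ⊆ S := Finset.subset_union_left
  have hS₂ : (walkStep μ (f * f)).support ⊆ S := Finset.subset_union_right
  have hff : expect (f * f) (fun _ => 1) = expect f f := by
    rw [expect_eq_sum (Finsupp.support_mul.trans Finset.inter_subset_left),
      expect_eq_sum subset_rfl]
    simp only [Finsupp.mul_apply, mul_one]
  calc expect (walkStep μ f) (walkStep μ f) = ∑ x ∈ S, walkStep μ f x ^ 2 := by
        rw [expect_eq_sum hS₁]; simp only [sq]
    _ ≤ ∑ x ∈ S, walkStep μ (f * f) x * 1 := Finset.sum_le_sum fun x _ => by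
        simpa [walkStep_apply, markovOp, Finsupp.mul_apply, sq] using
          hμ.sq_expect_le fun g => f (g⁻¹ • x)
    _ = expect f f := by
        rw [← expect_eq_sum hS₂, expect_walkStep, hff, hμ.expect_const]

end Walk

section ConvPow

variable {G X : Type*} [Group G] [MulAction G X] {μ : G →₀ ℝ}

lemma convPow_zero (μ : G →₀ ℝ) : convPow μ 0 = Finsupp.single 1 1 := rfl

lemma IsProb.convPow (hμ : IsProb μ) (n : ℕ) : IsProb (convPow μ n) := by
  induction n with
  | zero =>
    rw [convPow_zero]
    exact ⟨fun x => Finsupp.single_nonneg.mpr zero_le_one x, Finsupp.sum_single_index rfl⟩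
  | succ n ih => exact hμ.walkStep ih

lemma expect_convPow_add (μ : G →₀ ℝ) (s t : ℕ) (φ : G → ℝ) :
    expect (convPow μ (s + t)) φ =
      expect (convPow μ s) fun x => expect (convPow μ t) fun y => φ (x * y) := by
  induction s generalizing φ with
  | zero => simp [convPow_zero, expect_single]
  | succ s ih =>
    rw [add_right_comm, convPow_succ, convPow_succ, expect_walkStep, expect_walkStep]
    simp only [ih, smul_eq_mul, mul_assoc]

lemma measOf_convPow_add (μ : G →₀ ℝ) (s t : ℕ) (A : Set G) :
    measOf (convPow μ (s + t)) A =
      expect (convPow μ s) fun x => measOf (convPow μ t) {y | x * y ∈ A} := by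
  simp only [measOf_eq_expect, expect_convPow_add]
  rfl

noncomputable def orbitWalk (μ : G →₀ ℝ) (x₀ : X) (n : ℕ) : X →₀ ℝ :=
  (convPow μ n).mapDomain (· • x₀)

variable (x₀ : X)

lemma orbitWalk_zero : orbitWalk μ x₀ 0 = Finsupp.single x₀ 1 := by
  simp [orbitWalk, convPow_zero]

lemma orbitWalk_succ (n : ℕ) : orbitWalk μ x₀ (n + 1) = walkStep μ (orbitWalk μ x₀ n) :=
  mapDomain_walkStep μ _ fun g x => mul_smul g x x₀

lemma orbitWalk_apply_self (n : ℕ) :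
    orbitWalk μ x₀ n x₀ = measOf (convPow μ n) (MulAction.stabilizer G x₀) := by
  rw [apply_eq_expect, orbitWalk, expect_mapDomain, measOf_eq_expect]
  rfl

lemma expect_orbitWalk (hsym : ∀ g, μ g⁻¹ = μ g) (m n : ℕ) :
    expect (orbitWalk μ x₀ m) (orbitWalk μ x₀ n) =
      measOf (convPow μ (m + n)) (MulAction.stabilizer G x₀) := by
  induction m generalizing n with
  | zero => rw [orbitWalk_zero, expect_single, one_mul, zero_add, orbitWalk_apply_self]
  | succ m ih =>
    rw [orbitWalk_succ, expect_walkStep_comm hsym, ← orbitWalk_succ, ih, add_right_comm,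
      add_assoc]

lemma antitone_measOf_convPow_stabilizer (hμ : IsProb μ) (hsym : ∀ g, μ g⁻¹ = μ g) :
    Antitone fun k => measOf (convPow μ (2 * k)) (MulAction.stabilizer G x₀) := by
  refine antitone_nat_of_succ_le fun k => ?_
  simp only [two_mul, ← expect_orbitWalk x₀ hsym, orbitWalk_succ]
  exact expect_walkStep_self_le hμ _

end ConvPow

section Harmonic

variable {G X : Type*} [Group G] [MulAction G X] {μ : G →₀ ℝ}

lemma markovOp_le (hμ : IsProb μ) {φ : X → ℝ} {M : ℝ} (h : ∀ x, φ x ≤ M) (x : X) :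
    markovOp μ φ x ≤ M := by
  rw [markovOp, ← hμ.expect_const M]
  exact expect_mono hμ.nonneg fun g => h _

lemma apply_inv_smul_eq_of_markovOp_eq (hμ : IsProb μ) {φ : X → ℝ} {M : ℝ}
    (h : ∀ x, φ x ≤ M) {x : X} (hx : markovOp μ φ x = M) {g : G} (hg : g ∈ μ.support) :
    φ (g⁻¹ • x) = M := by
  have hzero : expect μ (fun g => M - φ (g⁻¹ • x)) = 0 := by
    rw [expect_sub, hμ.expect_const, ← markovOp, hx, sub_self]
  rw [expect_eq_sum subset_rfl] at hzero
  have hterm := (Finset.sum_eq_zero_iff_of_nonneg fun g _ =>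
    mul_nonneg (hμ.nonneg g) (sub_nonneg.mpr (h _))).mp hzero g hg
  rcases mul_eq_zero.mp hterm with hμg | hφ
  · exact absurd hμg (Finsupp.mem_support_iff.mp hg)
  · linarith

lemma inv_mem_support (hsym : ∀ g, μ g⁻¹ = μ g) {g : G} (hg : g ∈ μ.support) :
    g⁻¹ ∈ μ.support := by
  rwa [Finsupp.mem_support_iff, hsym, ← Finsupp.mem_support_iff]

lemma eq_of_markovOp_markovOp_eq_of_le [MulAction.IsPretransitive G X] (hμ : IsProb μ)
    (hsym : ∀ g, μ g⁻¹ = μ g) (hgen : Subgroup.closure (μ.support : Set G) = ⊤)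
    (hid : 1 ∈ μ.support) {w : X → ℝ} (hw : markovOp μ (markovOp μ w) = w) {x₀ : X}
    (hmax : ∀ x, w x ≤ w x₀) (x : X) : w x = w x₀ := by
  have hstep : ∀ y, w y = w x₀ → ∀ g ∈ μ.support, w (g⁻¹ • y) = w x₀ := by
    intro y hy g hg
    -- as `1 ∈ supp μ`, the maximum of `markovOp μ (markovOp μ w)` at `y` is also attained by
    -- `markovOp μ w` at `y`
    have hPw : markovOp μ w y = w x₀ := by
      simpa using apply_inv_smul_eq_of_markovOp_eq hμ (markovOp_le hμ hmax)
        (by rw [hw, hy]) hid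
    exact apply_inv_smul_eq_of_markovOp_eq hμ hmax hPw hg
  have hclosure : ∀ g ∈ Subgroup.closure (μ.support : Set G), ∀ y, w y = w x₀ →
      w (g • y) = w x₀ := by
    intro g hg
    induction hg using Subgroup.closure_induction'' with
    | mem g hg => exact fun y hy => by simpa using hstep y hy g⁻¹ (inv_mem_support hsym hg)
    | inv_mem g hg => exact fun y hy => hstep y hy g hg
    | one => simp
    | mul g h _ _ hg hh => exact fun y hy => by rw [mul_smul]; exact hg _ (hh y hy)
  obtain ⟨g, rfl⟩ := MulAction.exists_smul_eq G x₀ x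
  exact hclosure g (hgen ▸ Subgroup.mem_top g) x₀ rfl

lemma finite_setOf_le_of_sum_sq_le {w : X → ℝ} {C : ℝ} (hw : ∀ s : Finset X, ∑ x ∈ s, w x ^ 2 ≤ C)
    {t : ℝ} (ht : 0 < t) : {x | t ≤ w x}.Finite := by
  by_contra hinf
  obtain ⟨n, hn⟩ := exists_nat_gt (C / t ^ 2)
  obtain ⟨s, hs, rfl⟩ := Set.Infinite.exists_subset_card_eq hinf n
  have hsum : (s.card : ℝ) * t ^ 2 ≤ ∑ x ∈ s, w x ^ 2 := by
    simpa using Finset.card_nsmul_le_sum s _ _ fun x hx => pow_le_pow_left₀ ht.le (hs hx) 2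
  rw [div_lt_iff₀ (by positivity)] at hn
  linarith [hw s]

theorem finite_of_markovOp_markovOp_eq [MulAction.IsPretransitive G X] (hμ : IsProb μ)
    (hsym : ∀ g, μ g⁻¹ = μ g) (hgen : Subgroup.closure (μ.support : Set G) = ⊤)
    (hid : 1 ∈ μ.support) {w : X → ℝ} (hw : markovOp μ (markovOp μ w) = w) {C : ℝ}
    (hsq : ∀ s : Finset X, ∑ x ∈ s, w x ^ 2 ≤ C) {x₀ : X} (hx₀ : 0 < w x₀) : Finite X := by
  have hA := finite_setOf_le_of_sum_sq_le hsq hx₀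
  obtain ⟨x₁, hx₁, hmax⟩ := Set.exists_max_image _ w hA ⟨x₀, show w x₀ ≤ w x₀ from le_rfl⟩
  have hglobal : ∀ x, w x ≤ w x₁ := fun x =>
    (le_or_gt (w x₀) (w x)).elim (hmax x) fun hlt => hlt.le.trans hx₁
  refine Set.finite_univ_iff.mp (hA.subset fun x _ => ?_)
  show w x₀ ≤ w x
  rw [eq_of_markovOp_markovOp_eq_of_le hμ hsym hgen hid hw hglobal x]
  exact hx₁

end Harmonic

section ReturnProbability

variable {G X : Type*} [Group G] [MulAction G X] {μ : G →₀ ℝ}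

lemma cauchySeq_orbitWalk_two_mul (hμ : IsProb μ) (hsym : ∀ g, μ g⁻¹ = μ g) (x₀ x : X) :
    CauchySeq fun m => orbitWalk μ x₀ (2 * m) x := by
  set b := fun k => measOf (convPow μ (2 * k)) (MulAction.stabilizer G x₀)
  have hanti : Antitone b := antitone_measOf_convPow_stabilizer x₀ hμ hsym
  have hlim : Tendsto b atTop (𝓝 (⨅ k, b k)) :=
    tendsto_atTop_ciInf hanti ⟨0, Set.forall_mem_range.mpr fun _ => (hμ.convPow _).measOf_nonneg _⟩
  have hdot : ∀ i j, expect (orbitWalk μ x₀ (2 * i)) (orbitWalk μ x₀ (2 * j)) = b (i + j) :=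
    fun i j => by rw [expect_orbitWalk x₀ hsym, ← mul_add]
  refine cauchySeq_of_le_tendsto_0 (fun N => √(2 * (b N - ⨅ k, b k))) (fun i j N hi hj => ?_) ?_
  · have hsq : (orbitWalk μ x₀ (2 * i) x - orbitWalk μ x₀ (2 * j) x) ^ 2 ≤
        2 * (b N - ⨅ k, b k) := by
      calc _ ≤ expect (orbitWalk μ x₀ (2 * i) - orbitWalk μ x₀ (2 * j))
              (orbitWalk μ x₀ (2 * i) - orbitWalk μ x₀ (2 * j)) := by
            simpa using sum_sq_le_expect_self (orbitWalk μ x₀ (2 * i) - orbitWalk μ x₀ (2 * j)) {x}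
        _ = b (i + i) - 2 * b (i + j) + b (j + j) := by rw [expect_sub_self, hdot, hdot, hdot]
        _ ≤ 2 * (b N - ⨅ k, b k) := by
            have := ciInf_le hlim.bddBelow_range (i + j)
            linarith [hanti (show N ≤ i + i by omega), hanti (show N ≤ j + j by omega)]
    exact Real.abs_le_sqrt hsq
  · simpa using ((hlim.sub_const (⨅ k, b k)).const_mul 2).sqrt

lemma tendsto_markovOp {φ : ℕ → X → ℝ} {ψ : X → ℝ} (h : ∀ x, Tendsto (φ · x) atTop (𝓝 (ψ x)))
    (x : X) : Tendsto (fun n => markovOp μ (φ n) x) atTop (𝓝 (markovOp μ ψ x)) :=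
  tendsto_expect μ fun g => h (g⁻¹ • x)

theorem finite_of_forall_le_measOf_convPow_stabilizer [MulAction.IsPretransitive G X]
    (hμ : IsProb μ) (hsym : ∀ g, μ g⁻¹ = μ g) (hgen : Subgroup.closure (μ.support : Set G) = ⊤)
    (hid : 1 ∈ μ.support) (x₀ : X) {δ : ℝ} (hδ : 0 < δ)
    (h : ∀ k, δ ≤ measOf (convPow μ (2 * k)) (MulAction.stabilizer G x₀)) : Finite X := by
  choose w hw using fun x =>
    cauchySeq_tendsto_of_complete (cauchySeq_orbitWalk_two_mul hμ hsym x₀ x)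
  have hharm : markovOp μ (markovOp μ w) = w := by
    have hu : ∀ m, ⇑(orbitWalk μ x₀ (2 * (m + 1))) =
        markovOp μ (markovOp μ (orbitWalk μ x₀ (2 * m))) := fun m => by
      rw [show 2 * (m + 1) = 2 * m + 1 + 1 by ring, orbitWalk_succ, orbitWalk_succ,
        coe_walkStep, coe_walkStep]
    funext x
    refine tendsto_nhds_unique ?_ ((hw x).comp (tendsto_add_atTop_nat 1))
    simp only [Function.comp_def, hu]
    exact tendsto_markovOp (tendsto_markovOp hw) x
  refine finite_of_markovOp_markovOp_eq hμ hsym hgen hid hharm (C := 1) (fun s => ?_)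
    (hδ.trans_le (ge_of_tendsto' (hw x₀) fun m => ?_))
  · refine le_of_tendsto' (tendsto_finsetSum s fun x _ => (hw x).pow 2) fun m => ?_
    refine (sum_sq_le_expect_self (orbitWalk μ x₀ (2 * m)) s).trans ?_
    rw [expect_orbitWalk x₀ hsym]
    exact (hμ.convPow _).measOf_le_one _
  · rw [orbitWalk_apply_self]
    exact h m

lemma antitone_measOf_convPow_subgroup (hμ : IsProb μ) (hsym : ∀ g, μ g⁻¹ = μ g)
    (H : Subgroup G) : Antitone fun k => measOf (convPow μ (2 * k)) H := by
  simpa only [MulAction.stabilizer_quotient] using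
    antitone_measOf_convPow_stabilizer ((1 : G) : G ⧸ H) hμ hsym

noncomputable def limReturnProb (μ : G →₀ ℝ) (H : Subgroup G) : ℝ :=
  ⨅ k, measOf (convPow μ (2 * k)) H

lemma bddBelow_measOf_convPow (hμ : IsProb μ) (H : Subgroup G) :
    BddBelow (Set.range fun k => measOf (convPow μ (2 * k)) H) :=
  ⟨0, Set.forall_mem_range.mpr fun _ => (hμ.convPow _).measOf_nonneg _⟩

lemma limReturnProb_le (hμ : IsProb μ) (H : Subgroup G) (k : ℕ) :
    limReturnProb μ H ≤ measOf (convPow μ (2 * k)) H :=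
  ciInf_le (bddBelow_measOf_convPow hμ H) k

lemma tendsto_measOf_convPow_limReturnProb (hμ : IsProb μ) (hsym : ∀ g, μ g⁻¹ = μ g)
    (H : Subgroup G) :
    Tendsto (fun k => measOf (convPow μ (2 * k)) H) atTop (𝓝 (limReturnProb μ H)) :=
  tendsto_atTop_ciInf (antitone_measOf_convPow_subgroup hμ hsym H) (bddBelow_measOf_convPow hμ H)

theorem Subgroup.finiteIndex_of_limReturnProb_pos (hμ : IsProb μ) (hsym : ∀ g, μ g⁻¹ = μ g)
    (hgen : Subgroup.closure (μ.support : Set G) = ⊤) (hid : 1 ∈ μ.support) {H : Subgroup G}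
    (hH : 0 < limReturnProb μ H) : H.FiniteIndex := by
  have : Finite (G ⧸ H) := finite_of_forall_le_measOf_convPow_stabilizer hμ hsym hgen hid
    ((1 : G) : G ⧸ H) hH (by rw [MulAction.stabilizer_quotient]; exact limReturnProb_le hμ H)
  exact Subgroup.finiteIndex_of_finite_quotient

end ReturnProbability

section Involutions

variable {G : Type*} [Group G] {μ : G →₀ ℝ}

lemma mul_comm_of_sq_eq_one {x y : G} (hx : x ^ 2 = 1) (hy : y ^ 2 = 1) (hxy : (x * y) ^ 2 = 1) :
    y * x = x * y := by
  rw [sq] at hx hy hxy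
  rw [eq_inv_of_mul_eq_one_left hxy, mul_inv_rev, inv_eq_of_mul_eq_one_left hx,
    inv_eq_of_mul_eq_one_left hy]

lemma IsProb.indicator_mul_measOf_add_measOf_sub_one_le {ν : G →₀ ℝ} (hν : IsProb ν) (x : G) :
    {g : G | g ^ 2 = 1}.indicator 1 x * measOf ν {g | g ^ 2 = 1} +
      measOf ν {y | (x * y) ^ 2 = 1} - 1 ≤ measOf ν (Subgroup.centralizer {x}) := by
  by_cases hx : x ^ 2 = 1
  · have hsub : {g : G | g ^ 2 = 1} ∩ {y | (x * y) ^ 2 = 1} ⊆ Subgroup.centralizer {x} :=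
      fun y hy => Subgroup.mem_centralizer_singleton_iff.mpr (mul_comm_of_sq_eq_one hx hy.1 hy.2)
    rw [Set.indicator_of_mem (show x ∈ {g : G | g ^ 2 = 1} from hx), Pi.one_apply, one_mul]
    linarith [hν.measOf_add_measOf_le {g : G | g ^ 2 = 1} {y | (x * y) ^ 2 = 1},
      hν.measOf_mono hsub]
  · rw [Set.indicator_of_notMem (show x ∉ {g : G | g ^ 2 = 1} from hx), zero_mul, zero_add]
    linarith [hν.measOf_le_one {y | (x * y) ^ 2 = 1}, hν.measOf_nonneg (Subgroup.centralizer {x})]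

lemma le_expect_measOf_convPow_centralizer (hμ : IsProb μ) (s t : ℕ) :
    measOf (convPow μ s) {g | g ^ 2 = 1} * measOf (convPow μ t) {g | g ^ 2 = 1} +
        measOf (convPow μ (s + t)) {g | g ^ 2 = 1} - 1 ≤
      expect (convPow μ s) fun x => measOf (convPow μ t) (Subgroup.centralizer {x}) := by
  rw [measOf_convPow_add, measOf_eq_expect (convPow μ s), ← expect_mul_const,
    ← expect_add, ← (hμ.convPow s).expect_const 1, ← expect_sub]
  exact expect_mono (hμ.convPow s).nonneg
    (hμ.convPow t).indicator_mul_measOf_add_measOf_sub_one_le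

lemma sq_add_sub_one_le_expect_limReturnProb (hμ : IsProb μ) (hsym : ∀ g, μ g⁻¹ = μ g) {α : ℝ}
    (hα : 0 ≤ α) {N : ℕ} (hN : ∀ n ≥ N, α ≤ measOf (convPow μ n) {g | g ^ 2 = 1}) {s : ℕ}
    (hs : N ≤ s) :
    α ^ 2 + α - 1 ≤ expect (convPow μ s) fun x => limReturnProb μ (Subgroup.centralizer {x}) := by
  refine ge_of_tendsto (tendsto_expect _ fun x => tendsto_measOf_convPow_limReturnProb hμ hsym _)
    (eventually_atTop.mpr ⟨N, fun k hk => ?_⟩)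
  refine le_trans ?_ (le_expect_measOf_convPow_centralizer hμ s (2 * k))
  have h₁ := hN s hs
  have h₂ := hN (2 * k) (by omega)
  have h₃ := hN (s + 2 * k) (by omega)
  nlinarith [mul_le_mul h₁ h₂ hα (hα.trans h₁)]

lemma half_le_measOf_convPow_setOf_le_limReturnProb (hμ : IsProb μ) (hsym : ∀ g, μ g⁻¹ = μ g)
    {α : ℝ} (hα : 0 ≤ α) (hε : 0 ≤ α ^ 2 + α - 1) {N : ℕ}
    (hN : ∀ n ≥ N, α ≤ measOf (convPow μ n) {g | g ^ 2 = 1}) {s : ℕ} (hs : N ≤ s) :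
    (α ^ 2 + α - 1) / 2 ≤ measOf (convPow μ s)
      {x | (α ^ 2 + α - 1) / 2 ≤ limReturnProb μ (Subgroup.centralizer {x})} := by
  have := (hμ.convPow s).expect_le_measOf_add
    (φ := fun x => limReturnProb μ (Subgroup.centralizer {x})) (t := (α ^ 2 + α - 1) / 2)
    (fun x => (limReturnProb_le hμ _ 0).trans ((hμ.convPow _).measOf_le_one _)) (by linarith)
  linarith [sq_add_sub_one_le_expect_limReturnProb hμ hsym hα hN hs]

end Involutions

section FCCenter

variable (G : Type*) [Group G]

def fcCenter : Subgroup G where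
  carrier := {g | (Subgroup.centralizer {g}).FiniteIndex}
  one_mem' := Subgroup.finiteIndex_of_le (H := ⊤) fun x _ =>
    Subgroup.mem_centralizer_singleton_iff.mpr (by rw [mul_one, one_mul])
  mul_mem' {a b} (ha : (Subgroup.centralizer {a}).FiniteIndex)
      (hb : (Subgroup.centralizer {b}).FiniteIndex) :=
    Subgroup.finiteIndex_of_le (H := Subgroup.centralizer {a} ⊓ Subgroup.centralizer {b})
      fun _ hx => Subgroup.mem_centralizer_singleton_iff.mpr <|
        Commute.mul_right (Subgroup.mem_centralizer_singleton_iff.mp hx.1)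
          (Subgroup.mem_centralizer_singleton_iff.mp hx.2)
  inv_mem' {a} (ha : (Subgroup.centralizer {a}).FiniteIndex) :=
    Subgroup.finiteIndex_of_le fun _ hx => Subgroup.mem_centralizer_singleton_iff.mpr <|
      Commute.inv_right (Subgroup.mem_centralizer_singleton_iff.mp hx)

variable {G}

lemma mem_fcCenter {g : G} : g ∈ fcCenter G ↔ (Subgroup.centralizer {g}).FiniteIndex := Iff.rfl

theorem exists_finiteIndex_commute_of_le_fcCenter (hG : Group.FG G) {H : Subgroup G}
    [H.FiniteIndex] (hH : H ≤ fcCenter G) :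
    ∃ K : Subgroup G, K.FiniteIndex ∧ ∀ x ∈ K, ∀ y ∈ K, x * y = y * x := by
  obtain ⟨S, hS⟩ := (Group.fg_iff_subgroup_fg H).mp (Subgroup.fg_of_index_ne_zero H)
  have : (Subgroup.centralizer (H : Set G)).FiniteIndex := by
    rw [← hS, Subgroup.centralizer_closure, Subgroup.centralizer_eq_iInf]
    exact Subgroup.finiteIndex_iInf' _ fun g hg =>
      mem_fcCenter.mp (hH (hS ▸ Subgroup.subset_closure hg))
  refine ⟨H ⊓ Subgroup.centralizer H, inferInstance, fun x hx y hy => ?_⟩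
  exact (Subgroup.mem_centralizer_iff.mp (Subgroup.mem_inf.mp hx).2 y
    (Subgroup.mem_inf.mp hy).1).symm

end FCCenter

lemma one_lt_sq_add_self {α : ℝ} (h : (√5 - 1) / 2 < α) : 1 < α ^ 2 + α := by
  have h5 : √5 ^ 2 = 5 := Real.sq_sqrt (by norm_num)
  nlinarith [Real.sqrt_nonneg 5]

/-- **Lemma (probability of involutions).** Let `G` be a finitely generated group and
`μ` a symmetric probability measure with finite generating support containing the
identity. If `liminf_n μ^{*n}({g : g² = 1}) > (√5 − 1)/2`, then `G` is virtually
abelian. -/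
theorem virtually_abelian_of_liminf_prob_involution {G : Type*} [Group G]
    (hFG : Group.FG G) (μ : G →₀ ℝ)
    (hpos : ∀ g : G, 0 ≤ μ g) (hsym : ∀ g : G, μ g⁻¹ = μ g)
    (htotal : μ.sum (fun _ c => c) = 1)
    (hgen : Subgroup.closure (μ.support : Set G) = ⊤)
    (hid : (1 : G) ∈ μ.support)
    (hliminf : (Real.sqrt 5 - 1) / 2 <
      Filter.liminf (fun n => measOf (convPow μ n) {g : G | g ^ 2 = 1}) Filter.atTop) :
    ∃ K : Subgroup G, K.FiniteIndex ∧ ∀ x ∈ K, ∀ y ∈ K, x * y = y * x := by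
  have hμ : IsProb μ := ⟨hpos, htotal⟩
  obtain ⟨α, hα, hαlim⟩ := exists_between hliminf
  obtain ⟨N, hN⟩ := eventually_atTop.mp <| eventually_lt_of_lt_liminf hαlim
    (isBoundedUnder_of ⟨0, fun n => (hμ.convPow n).measOf_nonneg _⟩)
  have hα₁ : 1 < α ^ 2 + α := one_lt_sq_add_self hα
  have hα₀ : 0 ≤ α := by nlinarith [Real.sqrt_nonneg 5]
  set ε := α ^ 2 + α - 1
  set V := {x : G | ε / 2 ≤ limReturnProb μ (Subgroup.centralizer {x})}
  have hε : 0 < ε / 2 := by linarith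
  have hVfc : V ⊆ fcCenter G := fun x hx => mem_fcCenter.mpr <|
    Subgroup.finiteIndex_of_limReturnProb_pos hμ hsym hgen hid (hε.trans_le hx)
  have : (Subgroup.closure V).FiniteIndex := by
    refine Subgroup.finiteIndex_of_limReturnProb_pos hμ hsym hgen hid (hε.trans_le <|
      ge_of_tendsto (tendsto_measOf_convPow_limReturnProb hμ hsym _) ?_)
    refine eventually_atTop.mpr ⟨N, fun k hk => ?_⟩
    exact (half_le_measOf_convPow_setOf_le_limReturnProb hμ hsym hα₀ (by linarith)
      (fun n hn => (hN n hn).le) (by omega)).trans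
      ((hμ.convPow _).measOf_mono Subgroup.subset_closure)
  exact exists_finiteIndex_commute_of_le_fcCenter hFG ((Subgroup.closure_le _).mpr hVfc)
end

section
/- Let G be a finitely generated group and μ a symmetric probability measure on G whose support is finite, generates G, and contains the identity. Let μ^{*n} denote the n-fold convolution power of μ. Then for every subgroup H of G and every a ∈ G, the sequence μ^{*n}(aH) converges as n → ∞ to 1/[G:H], where 1/[G:H] is interpreted as 0 when H has infinite index. -/
open Filter Topology
open scoped RealInnerProductSpace ENNReal

local notation "ℓ²(" X ")" => lp (fun _ : X => ℝ) 2

theorem Finsupp.apply_pos_of_mem_support {α : Type*} {f : α →₀ ℝ} (hf : ∀ a, 0 ≤ f a) {a : α}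
    (ha : a ∈ f.support) : 0 < f a :=
  (hf a).lt_of_ne (Finsupp.mem_support_iff.mp ha).symm

section SymmetricContraction

variable {E : Type*} [SeminormedAddCommGroup E] [InnerProductSpace ℝ E] {T : E →ₗ[ℝ] E}

theorem LinearMap.IsSymmetric.inner_pow_apply_pow_apply (hT : T.IsSymmetric) (m n : ℕ) (x : E) :
    ⟪(T ^ m) x, (T ^ n) x⟫ = ⟪x, (T ^ (m + n)) x⟫ := by
  rw [hT.pow m, ← Module.End.mul_apply, ← pow_add]

theorem LinearMap.IsSymmetric.norm_pow_apply_sub_pow_apply_sq (hT : T.IsSymmetric)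
    (n k : ℕ) (x : E) :
    ‖(T ^ (n + 2 * k)) x - (T ^ n) x‖ ^ 2 =
      ‖(T ^ (n + 2 * k)) x‖ ^ 2 - 2 * ‖(T ^ (n + k)) x‖ ^ 2 + ‖(T ^ n) x‖ ^ 2 := by
  rw [norm_sub_sq_real, ← real_inner_self_eq_norm_sq ((T ^ (n + k)) x), real_inner_comm,
    hT.inner_pow_apply_pow_apply, hT.inner_pow_apply_pow_apply]
  ring_nf

theorem antitone_norm_pow_apply (hle : ∀ x, ‖T x‖ ≤ ‖x‖) (x : E) :
    Antitone fun n => ‖(T ^ n) x‖ :=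
  antitone_nat_of_succ_le fun n => by
    rw [pow_succ', Module.End.mul_apply]
    exact hle _

theorem antitone_norm_pow_apply_sq (hle : ∀ x, ‖T x‖ ≤ ‖x‖) (x : E) :
    Antitone fun n => ‖(T ^ n) x‖ ^ 2 := fun _ _ hij =>
  pow_le_pow_left₀ (norm_nonneg _) (antitone_norm_pow_apply hle x hij) 2

theorem mul_norm_le_norm_add_apply {ε : ℝ} (hge : ∀ x, ε * ‖x‖ ^ 2 ≤ ⟪x + T x, x⟫) (x : E) :
    ε * ‖x‖ ≤ ‖x + T x‖ := by
  rcases (norm_nonneg x).eq_or_lt with hx | hx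
  · rw [← hx, mul_zero]
    exact norm_nonneg _
  · refine le_of_mul_le_mul_right ?_ hx
    calc ε * ‖x‖ * ‖x‖ = ε * ‖x‖ ^ 2 := by ring
      _ ≤ ⟪x + T x, x⟫ := hge x
      _ ≤ ‖x + T x‖ * ‖x‖ := real_inner_le_norm _ _

section LowerBound

variable (hsymm : T.IsSymmetric) (hle : ∀ x, ‖T x‖ ≤ ‖x‖) {x : E} {L : ℝ}
  (hL : ∀ n, L ≤ ‖(T ^ n) x‖ ^ 2)
include hsymm hle hL

theorem norm_pow_add_two_mul_apply_sub_le (n k : ℕ) :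
    ‖(T ^ (n + 2 * k)) x - (T ^ n) x‖ ≤ √(‖(T ^ n) x‖ ^ 2 - L) := by
  rw [← Real.sqrt_sq (norm_nonneg _), hsymm.norm_pow_apply_sub_pow_apply_sq]
  refine Real.sqrt_le_sqrt ?_
  linarith [antitone_norm_pow_apply_sq hle x (show n + k ≤ n + 2 * k by omega), hL (n + k)]

theorem mul_norm_pow_succ_apply_sub_le {ε : ℝ} (hge : ∀ x, ε * ‖x‖ ^ 2 ≤ ⟪x + T x, x⟫) (n : ℕ) :
    ε * ‖(T ^ (n + 1)) x - (T ^ n) x‖ ≤ √(‖(T ^ n) x‖ ^ 2 - L) := by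
  have hstep : (T ^ (n + 1)) x - (T ^ n) x + T ((T ^ (n + 1)) x - (T ^ n) x) =
      (T ^ (n + 2 * 1)) x - (T ^ n) x := by
    simp only [map_sub, ← Module.End.mul_apply, ← pow_succ']
    abel
  exact (mul_norm_le_norm_add_apply hge _).trans
    (hstep ▸ norm_pow_add_two_mul_apply_sub_le hsymm hle hL n 1)

theorem norm_pow_apply_sub_le {ε : ℝ} (hε : 0 < ε) (hge : ∀ x, ε * ‖x‖ ^ 2 ≤ ⟪x + T x, x⟫)
    {n m : ℕ} (hnm : n ≤ m) :
    ‖(T ^ m) x - (T ^ n) x‖ ≤ (1 + ε⁻¹) * √(‖(T ^ n) x‖ ^ 2 - L) := by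
  have hsqrt : √(‖(T ^ (n + 1)) x‖ ^ 2 - L) ≤ √(‖(T ^ n) x‖ ^ 2 - L) :=
    Real.sqrt_le_sqrt (by linarith [antitone_norm_pow_apply_sq hle x n.le_succ])
  have hdiff : ‖(T ^ (n + 1)) x - (T ^ n) x‖ ≤ ε⁻¹ * √(‖(T ^ n) x‖ ^ 2 - L) := by
    rw [le_inv_mul_iff₀ hε]
    exact mul_norm_pow_succ_apply_sub_le hsymm hle hL hge n
  have hroot := Real.sqrt_nonneg (‖(T ^ n) x‖ ^ 2 - L)
  obtain ⟨k, rfl | rfl⟩ : ∃ k, m = n + 2 * k ∨ m = n + 1 + 2 * k :=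
    ⟨(m - n) / 2, by omega⟩
  · exact (norm_pow_add_two_mul_apply_sub_le hsymm hle hL n k).trans
      (le_mul_of_one_le_left hroot (by linarith [inv_pos.2 hε]))
  · calc ‖(T ^ (n + 1 + 2 * k)) x - (T ^ n) x‖
        ≤ ‖(T ^ (n + 1 + 2 * k)) x - (T ^ (n + 1)) x‖ + ‖(T ^ (n + 1)) x - (T ^ n) x‖ :=
          norm_sub_le_norm_sub_add_norm_sub _ _ _
      _ ≤ √(‖(T ^ n) x‖ ^ 2 - L) + ε⁻¹ * √(‖(T ^ n) x‖ ^ 2 - L) := by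
          gcongr
          exact (norm_pow_add_two_mul_apply_sub_le hsymm hle hL (n + 1) k).trans hsqrt
      _ = (1 + ε⁻¹) * √(‖(T ^ n) x‖ ^ 2 - L) := by ring

end LowerBound

theorem tendsto_sqrt_norm_pow_apply_sq_sub_iInf (hle : ∀ x, ‖T x‖ ≤ ‖x‖) (x : E) :
    Tendsto (fun n => √(‖(T ^ n) x‖ ^ 2 - ⨅ k, ‖(T ^ k) x‖ ^ 2)) atTop (𝓝 0) := by
  have hlim := (tendsto_atTop_ciInf (antitone_norm_pow_apply_sq hle x) ⟨0, by rintro _ ⟨n, rfl⟩; positivity⟩).sub_const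
    (⨅ k, ‖(T ^ k) x‖ ^ 2)
  rw [sub_self] at hlim
  simpa only [Real.sqrt_zero] using hlim.sqrt

theorem iInf_norm_pow_apply_sq_le (x : E) (n : ℕ) :
    ⨅ k, ‖(T ^ k) x‖ ^ 2 ≤ ‖(T ^ n) x‖ ^ 2 :=
  ciInf_le ⟨0, by rintro _ ⟨k, rfl⟩; positivity⟩ n

variable (hsymm : T.IsSymmetric) (hle : ∀ x, ‖T x‖ ≤ ‖x‖) {ε : ℝ} (hε : 0 < ε)
  (hge : ∀ x, ε * ‖x‖ ^ 2 ≤ ⟪x + T x, x⟫)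
include hsymm hle hε hge

theorem LinearMap.IsSymmetric.cauchySeq_pow_apply (x : E) : CauchySeq fun n => (T ^ n) x := by
  refine cauchySeq_of_le_tendsto_0' _ (fun n m hnm => ?_) (by
    simpa only [mul_zero] using (tendsto_sqrt_norm_pow_apply_sq_sub_iInf hle x).const_mul (1 + ε⁻¹))
  rw [dist_eq_norm, norm_sub_rev]
  exact norm_pow_apply_sub_le hsymm hle (iInf_norm_pow_apply_sq_le x) hε hge hnm

theorem LinearMap.IsSymmetric.tendsto_pow_succ_apply_sub_pow_apply (x : E) :
    Tendsto (fun n => (T ^ (n + 1)) x - (T ^ n) x) atTop (𝓝 0) := by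
  refine squeeze_zero_norm (fun n => ?_)
    (by simpa only [mul_zero] using
      (tendsto_sqrt_norm_pow_apply_sq_sub_iInf hle x).const_mul (1 + ε⁻¹))
  exact norm_pow_apply_sub_le hsymm hle (iInf_norm_pow_apply_sq_le x) hε hge n.le_succ

end SymmetricContraction

section MarkovOperator

variable {E : Type*} [SeminormedAddCommGroup E] [InnerProductSpace ℝ E]

theorem LinearIsometryEquiv.inner_add_apply_self (U : E ≃ₗᵢ[ℝ] E) (x : E) :
    ⟪x + U x, x⟫ = ‖x + U x‖ ^ 2 / 2 := by
  rw [norm_add_sq_real, inner_add_left, real_inner_self_eq_norm_sq, U.norm_map, real_inner_comm]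
  ring

theorem LinearIsometryEquiv.inner_sub_apply_self (U : E ≃ₗᵢ[ℝ] E) (x : E) :
    ⟪x - U x, x⟫ = ‖x - U x‖ ^ 2 / 2 := by
  rw [norm_sub_sq_real, inner_sub_left, real_inner_self_eq_norm_sq, U.norm_map, real_inner_comm]
  ring

variable {G : Type*} [Group G] (ρ : G →* (E ≃ₗᵢ[ℝ] E)) (μ : G →₀ ℝ)

noncomputable def markovOperator : E →ₗ[ℝ] E :=
  ∑ g ∈ μ.support, μ g • (ρ g).toLinearEquiv.toLinearMap

variable {ρ μ}

theorem markovOperator_apply (x : E) : markovOperator ρ μ x = ∑ g ∈ μ.support, μ g • ρ g x := by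
  simp [markovOperator]

theorem isSymmetric_markovOperator (hsym : ∀ g, μ g⁻¹ = μ g) :
    (markovOperator ρ μ).IsSymmetric := fun x y => by
  simp only [markovOperator_apply, sum_inner, inner_sum, real_inner_smul_left,
    real_inner_smul_right, LinearIsometryEquiv.inner_map_eq_flip]
  refine Finset.sum_equiv (Equiv.inv G) (fun g => ?_) (fun g _ => ?_)
  · simp [hsym]
  · simp [hsym, ← LinearIsometryEquiv.inv_def, ← map_inv]

variable (hpos : ∀ g, 0 ≤ μ g) (hμ : ∑ g ∈ μ.support, μ g = 1)
include hμ

theorem markovOperator_apply_eq_of_forall_map_eq {w : E} (hw : ∀ g, ρ g w = w) :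
    markovOperator ρ μ w = w := by
  rw [markovOperator_apply]
  simp only [hw, ← Finset.sum_smul, hμ, one_smul]

theorem inner_markovOperator_pow_apply_of_forall_map_eq (hsym : ∀ g, μ g⁻¹ = μ g) {w : E}
    (hw : ∀ g, ρ g w = w) (x : E) (n : ℕ) : ⟪(markovOperator ρ μ ^ n) x, w⟫ = ⟪x, w⟫ := by
  rw [(isSymmetric_markovOperator hsym).pow n, Module.End.pow_apply,
    Function.iterate_fixed (markovOperator_apply_eq_of_forall_map_eq hμ hw)]

theorem inner_add_markovOperator_apply_self (x : E) :
    ⟪x + markovOperator ρ μ x, x⟫ = ∑ g ∈ μ.support, μ g * (‖x + ρ g x‖ ^ 2 / 2) := by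
  have hsplit : x + markovOperator ρ μ x = ∑ g ∈ μ.support, μ g • (x + ρ g x) := by
    simp only [markovOperator_apply, smul_add, Finset.sum_add_distrib, ← Finset.sum_smul, hμ,
      one_smul]
  simp only [hsplit, sum_inner, real_inner_smul_left, LinearIsometryEquiv.inner_add_apply_self]

theorem inner_sub_markovOperator_apply_self (x : E) :
    ⟪x - markovOperator ρ μ x, x⟫ = ∑ g ∈ μ.support, μ g * (‖x - ρ g x‖ ^ 2 / 2) := by
  have hsplit : x - markovOperator ρ μ x = ∑ g ∈ μ.support, μ g • (x - ρ g x) := by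
    simp only [markovOperator_apply, smul_sub, Finset.sum_sub_distrib, ← Finset.sum_smul, hμ,
      one_smul]
  simp only [hsplit, sum_inner, real_inner_smul_left, LinearIsometryEquiv.inner_sub_apply_self]

include hpos

theorem norm_markovOperator_apply_le (x : E) : ‖markovOperator ρ μ x‖ ≤ ‖x‖ :=
  calc ‖markovOperator ρ μ x‖ ≤ ∑ g ∈ μ.support, ‖μ g • ρ g x‖ := by
        rw [markovOperator_apply]
        exact norm_sum_le _ _
    _ = ‖x‖ := by
        simp only [norm_smul, LinearIsometryEquiv.norm_map, Real.norm_of_nonneg (hpos _),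
          ← Finset.sum_mul, hμ, one_mul]

theorem two_mul_mul_norm_sq_le_inner_add_markovOperator_apply_self (hid : 1 ∈ μ.support)
    (x : E) : 2 * μ 1 * ‖x‖ ^ 2 ≤ ⟪x + markovOperator ρ μ x, x⟫ := by
  rw [inner_add_markovOperator_apply_self hμ]
  refine le_of_eq_of_le ?_ (Finset.single_le_sum (fun g _ => by have := hpos g; positivity) hid)
  rw [map_one ρ, LinearIsometryEquiv.coe_one, id, ← two_smul ℝ x, norm_smul, Real.norm_two]
  ring

theorem mul_norm_sub_apply_sq_le {g : G} (hg : g ∈ μ.support) (x : E) :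
    μ g * ‖x - ρ g x‖ ^ 2 ≤ 2 * ⟪x - markovOperator ρ μ x, x⟫ := by
  rw [inner_sub_markovOperator_apply_self hμ, Finset.mul_sum]
  refine le_of_eq_of_le ?_ (Finset.single_le_sum (fun g _ => by have := hpos g; positivity) hg)
  ring

theorem cauchySeq_markovOperator_pow_apply (hsym : ∀ g, μ g⁻¹ = μ g) (hid : 1 ∈ μ.support)
    (x : E) : CauchySeq fun n => (markovOperator ρ μ ^ n) x :=
  (isSymmetric_markovOperator hsym).cauchySeq_pow_apply (norm_markovOperator_apply_le hpos hμ)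
    (mul_pos two_pos (Finsupp.apply_pos_of_mem_support hpos hid))
    (two_mul_mul_norm_sq_le_inner_add_markovOperator_apply_self hpos hμ hid) x

theorem tendsto_markovOperator_pow_apply_sub (hsym : ∀ g, μ g⁻¹ = μ g) (hid : 1 ∈ μ.support)
    (x : E) : Tendsto (fun n => (markovOperator ρ μ ^ n) x - markovOperator ρ μ
      ((markovOperator ρ μ ^ n) x)) atTop (𝓝 0) := by
  have := ((isSymmetric_markovOperator (ρ := ρ) hsym).tendsto_pow_succ_apply_sub_pow_apply
    (norm_markovOperator_apply_le hpos hμ)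
    (mul_pos two_pos (Finsupp.apply_pos_of_mem_support hpos hid))
    (two_mul_mul_norm_sq_le_inner_add_markovOperator_apply_self hpos hμ hid) x).neg
  simpa only [neg_sub, neg_zero, pow_succ', Module.End.mul_apply] using this

theorem tendsto_markovOperator_pow_apply_sub_map (hsym : ∀ g, μ g⁻¹ = μ g)
    (hid : 1 ∈ μ.support) {g : G} (hg : g ∈ μ.support) (x : E) :
    Tendsto (fun n => (markovOperator ρ μ ^ n) x - ρ g ((markovOperator ρ μ ^ n) x)) atTop
      (𝓝 0) := by
  set y := fun n => (markovOperator ρ μ ^ n) x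
  have hbound : ∀ n, ‖y n - ρ g (y n)‖ ^ 2 ≤
      2 * ‖x‖ / μ g * ‖y n - markovOperator ρ μ (y n)‖ := by
    intro n
    have hdir := mul_norm_sub_apply_sq_le (ρ := ρ) hpos hμ hg (y n)
    have hcs := real_inner_le_norm (y n - markovOperator ρ μ (y n)) (y n)
    have hyx : ‖y n‖ ≤ ‖x‖ := by
      simpa [y] using antitone_norm_pow_apply (norm_markovOperator_apply_le hpos hμ) x
        (Nat.zero_le n)
    rw [div_mul_eq_mul_div, le_div_iff₀ (Finsupp.apply_pos_of_mem_support hpos hg)]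
    nlinarith [mul_le_mul_of_nonneg_left hyx (norm_nonneg (y n - markovOperator ρ μ (y n)))]
  have hsq : Tendsto (fun n => ‖y n - ρ g (y n)‖ ^ 2) atTop (𝓝 0) :=
    squeeze_zero (fun n => sq_nonneg _) hbound (by
      simpa using (tendsto_markovOperator_pow_apply_sub hpos hμ hsym hid x).norm.const_mul
        (2 * ‖x‖ / μ g))
  rw [tendsto_zero_iff_norm_tendsto_zero]
  simpa [Real.sqrt_sq (norm_nonneg _)] using hsq.sqrt

end MarkovOperator

section Invariance

variable {E : Type*} [NormedAddCommGroup E] [InnerProductSpace ℝ E] {G : Type*} [Group G]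
  {ρ : G →* (E ≃ₗᵢ[ℝ] E)} {μ : G →₀ ℝ}

theorem map_eq_self_of_tendsto_markovOperator_pow (hpos : ∀ g, 0 ≤ μ g)
    (hμ : ∑ g ∈ μ.support, μ g = 1) (hsym : ∀ g, μ g⁻¹ = μ g) (hid : 1 ∈ μ.support) {x v : E}
    (hv : Tendsto (fun n => (markovOperator ρ μ ^ n) x) atTop (𝓝 v)) {g : G}
    (hg : g ∈ μ.support) : ρ g v = v :=
  (sub_eq_zero.1 (tendsto_nhds_unique (hv.sub (((ρ g).continuous.tendsto v).comp hv))
    (tendsto_markovOperator_pow_apply_sub_map hpos hμ hsym hid hg x))).symm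

theorem inner_eq_of_tendsto_markovOperator_pow (hμ : ∑ g ∈ μ.support, μ g = 1)
    (hsym : ∀ g, μ g⁻¹ = μ g) {x v w : E}
    (hv : Tendsto (fun n => (markovOperator ρ μ ^ n) x) atTop (𝓝 v)) (hw : ∀ g, ρ g w = w) :
    ⟪v, w⟫ = ⟪x, w⟫ :=
  tendsto_nhds_unique (hv.inner tendsto_const_nhds) (by
    simp only [inner_markovOperator_pow_apply_of_forall_map_eq hμ hsym hw]
    exact tendsto_const_nhds)

theorem map_eq_self_of_closure_eq_top {S : Set G} (hS : Subgroup.closure S = ⊤) {v : E}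
    (hv : ∀ g ∈ S, ρ g v = v) (g : G) : ρ g v = v := by
  have hg : g ∈ Subgroup.closure S := hS ▸ Subgroup.mem_top g
  induction hg using Subgroup.closure_induction with
  | mem g hg => exact hv g hg
  | one => simp
  | mul g h _ _ hg hh => simp [hg, hh]
  | inv g _ hg => rw [map_inv, LinearIsometryEquiv.inv_def, LinearIsometryEquiv.symm_apply_eq, hg]

end Invariance

theorem Memℓp.comp_equiv {α β E : Type*} [NormedAddCommGroup E] {p : ℝ≥0∞}
    (hp : 0 < p.toReal) {f : β → E} (hf : Memℓp f p) (e : α ≃ β) : Memℓp (f ∘ e) p :=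
  (memℓp_gen_iff hp).2 (e.summable_iff.2 ((memℓp_gen_iff hp).1 hf))

theorem Memℓp.eq_zero_of_const {α E : Type*} [NormedAddCommGroup E] [Infinite α] {p : ℝ≥0∞}
    (hp : 0 < p.toReal) {c : E} (hc : Memℓp (fun _ : α => c) p) : c = 0 :=
  norm_eq_zero.1 ((Real.rpow_eq_zero_iff_of_nonneg (norm_nonneg c)).1
    ((summable_const_iff _).1 (hc.summable hp))).1

section Translation

variable {G X : Type*} [Group G] [MulAction G X]

noncomputable def lpTranslate : G →* (ℓ²(X) ≃ₗᵢ[ℝ] ℓ²(X)) where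
  toFun g :=
    { toFun f := ⟨f ∘ MulAction.toPerm g⁻¹, (lp.memℓp f).comp_equiv (by norm_num) _⟩
      invFun f := ⟨f ∘ MulAction.toPerm g, (lp.memℓp f).comp_equiv (by norm_num) _⟩
      map_add' _ _ := rfl
      map_smul' _ _ := rfl
      left_inv f := by ext; simp
      right_inv f := by ext; simp
      norm_map' f := by
        simp only [lp.norm_eq_tsum_rpow (by norm_num : 0 < (2 : ℝ≥0∞).toReal)]
        exact congrArg (· ^ _) ((MulAction.toPerm g⁻¹).tsum_eq fun y => ‖f y‖ ^ _) }
  map_one' := by ext; simp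
  map_mul' g h := by
    ext f y
    show f ((g * h)⁻¹ • y) = f (h⁻¹ • g⁻¹ • y)
    rw [mul_inv_rev, mul_smul]

theorem lpTranslate_apply (g : G) (f : ℓ²(X)) (y : X) : lpTranslate g f y = f (g⁻¹ • y) := rfl

variable [MulAction.IsPretransitive G X] {v : ℓ²(X)} (hv : ∀ g : G, lpTranslate g v = v)
include hv

theorem apply_eq_of_forall_lpTranslate_eq (x y : X) : v y = v x := by
  obtain ⟨g, rfl⟩ := MulAction.exists_smul_eq G x y
  calc v (g • x) = lpTranslate g v (g • x) := by rw [hv]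
    _ = v x := by rw [lpTranslate_apply, inv_smul_smul]

theorem apply_eq_zero_of_forall_lpTranslate_eq [Infinite X] (x : X) : v x = 0 :=
  Memℓp.eq_zero_of_const (by norm_num)
    (funext (apply_eq_of_forall_lpTranslate_eq hv x) ▸ lp.memℓp v)

end Translation

theorem measOf_eq_linearCombination {G : Type*} (ν : G →₀ ℝ) (A : Set G) :
    measOf ν A = Finsupp.linearCombination ℝ (A.indicator 1) ν := by
  rw [measOf, Finsupp.linearCombination_apply]
  refine Finsupp.sum_congr fun g _ => ?_
  by_cases hg : g ∈ A <;> simp [hg]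

section RandomWalk

variable {G : Type*} [Group G]

theorem measOf_convPow_zero (μ : G →₀ ℝ) (A : Set G) :
    measOf (convPow μ 0) A = A.indicator 1 1 := by
  simp [measOf_eq_linearCombination, convPow]

theorem measOf_convPow_succ (μ : G →₀ ℝ) (n : ℕ) (A : Set G) :
    measOf (convPow μ (n + 1)) A =
      ∑ g ∈ μ.support, μ g * measOf (convPow μ n) ((g * ·) ⁻¹' A) := by
  rw [measOf_eq_linearCombination, convPow, Finsupp.sum, map_sum]
  refine Finset.sum_congr rfl fun g _ => ?_
  rw [map_smul, Finsupp.linearCombination_mapDomain, measOf_eq_linearCombination, smul_eq_mul]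
  rfl

variable {X : Type*} [MulAction G X]

theorem measOf_convPow_succ_orbit (μ : G →₀ ℝ) (n : ℕ) (x₀ y : X) :
    measOf (convPow μ (n + 1)) {g | g • x₀ = y} =
      ∑ g ∈ μ.support, μ g * measOf (convPow μ n) {h | h • x₀ = g⁻¹ • y} := by
  rw [measOf_convPow_succ]
  congr! 3 with g
  ext h
  simp [mul_smul, eq_inv_smul_iff]

theorem markovOperator_lpTranslate_pow_single_apply [DecidableEq X] (μ : G →₀ ℝ) (x₀ : X)
    (n : ℕ) (y : X) :
    (markovOperator lpTranslate μ ^ n) (lp.single 2 x₀ 1) y =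
      measOf (convPow μ n) {g | g • x₀ = y} := by
  induction n generalizing y with
  | zero =>
    by_cases hy : x₀ = y <;> simp [measOf_convPow_zero, lp.single_apply, hy, eq_comm]
  | succ n ih =>
    rw [pow_succ', Module.End.mul_apply, markovOperator_apply, lp.coeFn_sum, Finset.sum_apply,
      measOf_convPow_succ_orbit]
    refine Finset.sum_congr rfl fun g _ => ?_
    rw [lp.coeFn_smul, Pi.smul_apply, lpTranslate_apply, ih, smul_eq_mul]

theorem natCard_mul_apply_eq_one_of_tendsto [Finite X] [DecidableEq X] {μ : G →₀ ℝ}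
    (hμ : ∑ g ∈ μ.support, μ g = 1) (hsym : ∀ g, μ g⁻¹ = μ g) {x₀ : X} {v : ℓ²(X)}
    (hv : Tendsto (fun n => (markovOperator lpTranslate μ ^ n) (lp.single 2 x₀ 1)) atTop (𝓝 v))
    (hconst : ∀ y, v y = v x₀) : Nat.card X * v x₀ = 1 := by
  have hmass := inner_eq_of_tendsto_markovOperator_pow hμ hsym hv
    (w := ⟨fun _ => 1, Memℓp.all _⟩) fun g => rfl
  rw [lp.inner_single_left, lp.inner_eq_tsum] at hmass
  simpa only [hconst, tsum_const, nsmul_eq_mul, RCLike.inner_apply, Real.ringHom_apply,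
    one_mul] using hmass

theorem tendsto_measOf_convPow_orbit [MulAction.IsPretransitive G X] {μ : G →₀ ℝ}
    (hpos : ∀ g, 0 ≤ μ g) (hsym : ∀ g, μ g⁻¹ = μ g) (hμ : ∑ g ∈ μ.support, μ g = 1)
    (hgen : Subgroup.closure (μ.support : Set G) = ⊤) (hid : 1 ∈ μ.support) (x₀ y : X) :
    Tendsto (fun n => measOf (convPow μ n) {g | g • x₀ = y}) atTop (𝓝 (Nat.card X : ℝ)⁻¹) := by
  classical
  obtain ⟨v, hv⟩ := cauchySeq_tendsto_of_complete
    (cauchySeq_markovOperator_pow_apply (ρ := lpTranslate) hpos hμ hsym hid (lp.single 2 x₀ 1))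
  have hfix : ∀ g, lpTranslate g v = v := map_eq_self_of_closure_eq_top hgen fun g hg =>
    map_eq_self_of_tendsto_markovOperator_pow hpos hμ hsym hid hv hg
  have hconst := apply_eq_of_forall_lpTranslate_eq hfix x₀
  have hval : v x₀ = (Nat.card X : ℝ)⁻¹ := by
    rcases finite_or_infinite X with hX | hX
    · exact eq_inv_of_mul_eq_one_right (natCard_mul_apply_eq_one_of_tendsto hμ hsym hv hconst)
    · rw [Nat.card_eq_zero_of_infinite, Nat.cast_zero, inv_zero]
      exact apply_eq_zero_of_forall_lpTranslate_eq hfix x₀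
  simp_rw [← markovOperator_lpTranslate_pow_single_apply]
  rw [← hval, ← hconst y]
  exact ((lp.evalCLM ℝ (fun _ : X => ℝ) 2 y).continuous.tendsto v).comp hv

end RandomWalk

theorem random_walk_measures_cosets_general {G : Type*} [Group G]
    (μ : G →₀ ℝ) (hpos : ∀ g : G, 0 ≤ μ g) (hsym : ∀ g : G, μ g⁻¹ = μ g)
    (htotal : μ.sum (fun _ c => c) = 1)
    (hgen : Subgroup.closure (μ.support : Set G) = ⊤)
    (hid : (1 : G) ∈ μ.support) (H : Subgroup G) (a : G) :
    Filter.Tendsto (fun n => measOf (convPow μ n) {g : G | a⁻¹ * g ∈ H})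
      Filter.atTop (nhds ((H.index : ℝ)⁻¹)) := by
  have hcoset : {g : G | a⁻¹ * g ∈ H} = {g | g • ((1 : G) : G ⧸ H) = a} := by
    ext g
    simp [QuotientGroup.eq, eq_comm]
  rw [hcoset]
  exact tendsto_measOf_convPow_orbit hpos hsym htotal hgen hid _ _

/-- **Equidistribution on cosets.** Let `G` be a finitely generated group and `μ` a
symmetric probability measure with finite generating support containing the identity.
Then for every subgroup `H ≤ G` and every `a ∈ G`, `μ^{*n}(aH) → 1/[G:H]`
(with `1/∞ = 0`; in Mathlib infinite index is `index = 0` and `(0:ℝ)⁻¹ = 0`). -/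
theorem random_walk_measures_cosets {G : Type*} [Group G] (hFG : Group.FG G)
    (μ : G →₀ ℝ) (hpos : ∀ g : G, 0 ≤ μ g) (hsym : ∀ g : G, μ g⁻¹ = μ g)
    (htotal : μ.sum (fun _ c => c) = 1)
    (hgen : Subgroup.closure (μ.support : Set G) = ⊤)
    (hid : (1 : G) ∈ μ.support) (H : Subgroup G) (a : G) :
    Filter.Tendsto (fun n => measOf (convPow μ n) {g : G | a⁻¹ * g ∈ H})
      Filter.atTop (nhds ((H.index : ℝ)⁻¹)) :=
  random_walk_measures_cosets_general μ hpos hsym htotal hgen hid H a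
end
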